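/- arXiv:0902.1075 — 9 statements merged into one kernel-verified Lean document; each statement's English description precedes it below -/
import Mathlib

section
/- Let X and Y be independent real random variables with Y symmetric (Y has the same distribution as -Y). Then for all u > 0, P(X + |Y| > u) = 2·P(X + Y > u) − P(X > u + |Y|). -/
/-!
Let `A = {X + Y > u}` and `B = {X - Y > u}`. Since `|Y| = max Y (-Y)`, the event
`{X + |Y| > u}` is `A ∪ B` and `{X > u + |Y|}` is `A ∩ B`, so inclusion–exclusion gives
`P(X + |Y| > u) = P(A) + P(B) - P(X > u + |Y|)`. By independence and symmetry, `(X, -Y)` has the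
same joint law as `(X, Y)`, hence `P(B) = P(A)`.
-/

open MeasureTheory ProbabilityTheory

section AbsInequalities

variable {α : Type*} [AddCommGroup α] [LinearOrder α] [IsOrderedAddMonoid α] {a b c : α}

theorem lt_add_abs_iff : a < b + |c| ↔ a < b + c ∨ a < b - c := by
  rw [← sub_lt_iff_lt_add', lt_abs, sub_lt_iff_lt_add', lt_neg, neg_sub, lt_sub_comm]

theorem add_abs_lt_iff : a + |c| < b ↔ a < b + c ∧ a < b - c := by
  rw [← lt_sub_iff_add_lt', abs_lt, neg_sub, sub_lt_iff_lt_add', lt_sub_comm]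

end AbsInequalities

theorem ProbabilityTheory.IndepFun.identDistrib_prodMk
    {Ω E F : Type*} [MeasurableSpace Ω] [MeasurableSpace E] [MeasurableSpace F]
    {μ : Measure Ω} [IsFiniteMeasure μ] {X : Ω → E} {Y Z : Ω → F}
    (hX : AEMeasurable X μ) (hY : AEMeasurable Y μ) (hZ : AEMeasurable Z μ)
    (hXY : IndepFun X Y μ) (hXZ : IndepFun X Z μ) (hZY : μ.map Z = μ.map Y) :
    IdentDistrib (fun ω => (X ω, Z ω)) (fun ω => (X ω, Y ω)) μ μ where
  aemeasurable_fst := hX.prodMk hZ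
  aemeasurable_snd := hX.prodMk hY
  map_eq := by
    rw [(indepFun_iff_map_prod_eq_prod_map_map hX hZ).mp hXZ,
      (indepFun_iff_map_prod_eq_prod_map_map hX hY).mp hXY, hZY]

theorem sym_identity
    {Ω : Type*} [MeasurableSpace Ω] (μ : Measure Ω) [IsProbabilityMeasure μ]
    (X Y : Ω → ℝ) (hX : Measurable X) (hY : Measurable Y)
    (hindep : IndepFun X Y μ)
    (hsym : Measure.map Y μ = Measure.map (fun ω => -Y ω) μ) :
    ∀ u : ℝ, 0 < u →
      (μ {ω | X ω + |Y ω| > u}).toReal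
        = 2 * (μ {ω | X ω + Y ω > u}).toReal - (μ {ω | X ω > u + |Y ω|}).toReal := by
  intro u _
  have hlaw : IdentDistrib (fun ω => (X ω, -Y ω)) (fun ω => (X ω, Y ω)) μ μ :=
    hindep.identDistrib_prodMk hX.aemeasurable hY.aemeasurable hY.neg.aemeasurable
      (hindep.comp measurable_id measurable_neg) hsym.symm
  have hflip : μ.real {ω | X ω - Y ω > u} = μ.real {ω | X ω + Y ω > u} := by
    have h := hlaw.measure_mem_eq (s := {p : ℝ × ℝ | p.1 + p.2 > u})
      (measurableSet_lt measurable_const (measurable_fst.add measurable_snd))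
    simp only [Set.preimage_ofPred_eq, ← sub_eq_add_neg] at h
    rw [measureReal_def, measureReal_def, h]
  have hunion : {ω | X ω + |Y ω| > u} = {ω | X ω + Y ω > u} ∪ {ω | X ω - Y ω > u} :=
    Set.ext fun ω => lt_add_abs_iff (a := u) (c := Y ω)
  have hinter : {ω | X ω > u + |Y ω|} = {ω | X ω + Y ω > u} ∩ {ω | X ω - Y ω > u} :=
    Set.ext fun ω => add_abs_lt_iff (a := u) (c := Y ω)
  have hmeas : MeasurableSet {ω | X ω - Y ω > u} := measurableSet_lt measurable_const (hX.sub hY)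
  simp only [← measureReal_def, hunion, hinter]
  linarith [measureReal_union_add_inter (μ := μ) (s := {ω | X ω + Y ω > u}) hmeas]
end

section
/- Let Z, W, Y be real random variables with Y independent of both Z and W, P(Z>u)>0 and P(W>u)>0 for all u>0. Suppose there is a>0 with lim_{u→∞} P(Y>u+a)/P(Y>u) = 0 and P(Y>u)>0 for all u. If lim_{u→∞} P(Z>u)/P(W>u) = 1, then lim_{u→∞} P(Y+Z>u)/P(Y+W>u) = 1. -/
open MeasureTheory ProbabilityTheory Filter

section aux

variable {Ω : Type*} [MeasurableSpace Ω] (μ : Measure Ω) [IsProbabilityMeasure μ]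

lemma tail_conv {Y X : Ω → ℝ} (hY : Measurable Y) (hX : Measurable X)
    (h : IndepFun Y X μ) (u : ℝ) :
    μ {ω | Y ω + X ω > u} = ∫⁻ y, μ {ω | X ω > u - y} ∂(μ.map Y) := by
  have hmap : μ.map (fun ω => (Y ω, X ω)) = (μ.map Y).prod (μ.map X) :=
    (indepFun_iff_map_prod_eq_prod_map_map hY.aemeasurable hX.aemeasurable).mp h
  have hS : MeasurableSet {p : ℝ × ℝ | u < p.1 + p.2} :=
    measurableSet_lt measurable_const (measurable_fst.add measurable_snd)
  have h1 : {ω | Y ω + X ω > u} = (fun ω => (Y ω, X ω)) ⁻¹' {p : ℝ × ℝ | u < p.1 + p.2} := rfl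
  rw [h1, ← Measure.map_apply (hY.prodMk hX) hS, hmap, Measure.prod_apply hS]
  refine lintegral_congr fun y => ?_
  have h2 : (Prod.mk y ⁻¹' {p : ℝ × ℝ | u < p.1 + p.2}) = Set.Ioi (u - y) := by
    ext x
    simp only [Set.mem_preimage, Set.mem_setOf_eq, Set.mem_Ioi, sub_lt_iff_lt_add']
  rw [h2, Measure.map_apply hX measurableSet_Ioi]
  rfl

lemma sum_tail_pos {W Y : Ω → ℝ} (hW : Measurable W) (hY : Measurable Y)
    (hYW : IndepFun Y W μ)
    (hWpos : ∀ u : ℝ, 0 < u → 0 < (μ {ω | W ω > u}).toReal)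
    (hYpos : ∀ u : ℝ, 0 < (μ {ω | Y ω > u}).toReal) (u : ℝ) :
    0 < (μ {ω | Y ω + W ω > u}).toReal := by
  have h1 : μ (Y ⁻¹' Set.Ioi (u - 1) ∩ W ⁻¹' Set.Ioi 1) =
      μ (Y ⁻¹' Set.Ioi (u - 1)) * μ (W ⁻¹' Set.Ioi 1) :=
    hYW.measure_inter_preimage_eq_mul _ _ measurableSet_Ioi measurableSet_Ioi
  have hsub : Y ⁻¹' Set.Ioi (u - 1) ∩ W ⁻¹' Set.Ioi 1 ⊆ {ω | Y ω + W ω > u} := by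
    rintro ω ⟨ha, hb⟩
    simp only [Set.mem_preimage, Set.mem_Ioi] at ha hb
    simp only [Set.mem_setOf_eq]
    linarith
  have hY' : μ (Y ⁻¹' Set.Ioi (u - 1)) ≠ 0 := by
    intro h
    have h2 := hYpos (u - 1)
    have h3 : μ {ω | Y ω > u - 1} = 0 := h
    rw [h3] at h2
    simp at h2
  have hW' : μ (W ⁻¹' Set.Ioi 1) ≠ 0 := by
    intro h
    have h2 := hWpos 1 one_pos
    have h3 : μ {ω | W ω > 1} = 0 := h
    rw [h3] at h2
    simp at h2
  have hpos : 0 < μ {ω | Y ω + W ω > u} :=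
    lt_of_lt_of_le (h1 ▸ ENNReal.mul_pos hY' hW') (measure_mono hsub)
  exact ENNReal.toReal_pos hpos.ne' (measure_ne_top μ _)

lemma one_sided {Z W Y : Ω → ℝ} (hZ : Measurable Z) (hW : Measurable W) (hY : Measurable Y)
    (hYZ : IndepFun Y Z μ) (hYW : IndepFun Y W μ)
    (hWpos : ∀ u : ℝ, 0 < u → 0 < (μ {ω | W ω > u}).toReal)
    (hYpos : ∀ u : ℝ, 0 < (μ {ω | Y ω > u}).toReal)
    {a : ℝ} (ha : 0 < a)
    (hYtail : Tendsto (fun u : ℝ =>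
        (μ {ω | Y ω > u + a}).toReal / (μ {ω | Y ω > u}).toReal) atTop (nhds 0))
    {ε : ℝ} (hε : 0 < ε)
    (hZW : ∀ᶠ v in atTop,
      (μ {ω | Z ω > v}).toReal ≤ (1 + ε / 2) * (μ {ω | W ω > v}).toReal) :
    ∀ᶠ u in atTop,
      (μ {ω | Y ω + Z ω > u}).toReal ≤ (1 + ε) * (μ {ω | Y ω + W ω > u}).toReal := by
  obtain ⟨u₀', hu₀'⟩ := eventually_atTop.mp hZW
  set u₀ : ℝ := max u₀' 1 with hu₀def
  have hu₀pos : (0 : ℝ) < u₀ := lt_of_lt_of_le one_pos (le_max_right _ _)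
  have hu₀ : ∀ v, u₀ ≤ v →
      (μ {ω | Z ω > v}).toReal ≤ (1 + ε / 2) * (μ {ω | W ω > v}).toReal :=
    fun v hv => hu₀' v (le_trans (le_max_left _ _) hv)
  set c : ENNReal := μ {ω | W ω > u₀ + a} with hcdef
  have hcpos : 0 < c.toReal := hWpos _ (by linarith)
  set δ : ℝ := ε / 2 * c.toReal with hδdef
  have hδpos : 0 < δ := by positivity
  have htail : ∀ᶠ v in atTop,
      (μ {ω | Y ω > v + a}).toReal ≤ δ * (μ {ω | Y ω > v}).toReal := by
    filter_upwards [hYtail.eventually (eventually_le_nhds hδpos)] with v hv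
    have h0 := hYpos v
    calc (μ {ω | Y ω > v + a}).toReal
        = (μ {ω | Y ω > v + a}).toReal / (μ {ω | Y ω > v}).toReal
            * (μ {ω | Y ω > v}).toReal := (div_mul_cancel₀ _ h0.ne').symm
      _ ≤ δ * (μ {ω | Y ω > v}).toReal := mul_le_mul_of_nonneg_right hv h0.le
  obtain ⟨v₀, hv₀⟩ := eventually_atTop.mp htail
  filter_upwards [eventually_ge_atTop (v₀ + u₀ + a)] with u hu
  set t : ℝ := u - u₀ with htdef
  have hta : v₀ ≤ t - a := by rw [htdef]; linarith
  set k : ENNReal := ENNReal.ofReal (1 + ε / 2) with hkdef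
  have hmW : Measurable (fun y : ℝ => μ {ω | W ω > u - y}) := by
    apply Monotone.measurable
    intro y₁ y₂ hy
    apply measure_mono
    intro ω hω
    simp only [Set.mem_setOf_eq] at hω ⊢
    linarith
  have hAeq := tail_conv μ hY hZ hYZ u
  have hBeq := tail_conv μ hY hW hYW u
  have hpt : ∀ y ∈ Set.Iic t, μ {ω | Z ω > u - y} ≤ k * μ {ω | W ω > u - y} := by
    intro y hy
    rw [Set.mem_Iic] at hy
    have hy' : u₀ ≤ u - y := by rw [htdef] at hy; linarith
    have h1 := hu₀ _ hy'
    calc μ {ω | Z ω > u - y}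
        = ENNReal.ofReal (μ {ω | Z ω > u - y}).toReal :=
          (ENNReal.ofReal_toReal (measure_ne_top μ _)).symm
      _ ≤ ENNReal.ofReal ((1 + ε / 2) * (μ {ω | W ω > u - y}).toReal) :=
          ENNReal.ofReal_le_ofReal h1
      _ = k * μ {ω | W ω > u - y} := by
          rw [hkdef, ENNReal.ofReal_mul (by linarith),
            ENNReal.ofReal_toReal (measure_ne_top μ _)]
  have hnuIoi : (μ.map Y) (Set.Iic t)ᶜ = μ {ω | Y ω > t} := by
    rw [Set.compl_Iic, Measure.map_apply hY measurableSet_Ioi]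
    rfl
  have hsplit : μ {ω | Y ω + Z ω > u} ≤ k * μ {ω | Y ω + W ω > u} + μ {ω | Y ω > t} := by
    rw [hAeq]
    calc ∫⁻ y, μ {ω | Z ω > u - y} ∂(μ.map Y)
        = (∫⁻ y in Set.Iic t, μ {ω | Z ω > u - y} ∂(μ.map Y)) +
            ∫⁻ y in (Set.Iic t)ᶜ, μ {ω | Z ω > u - y} ∂(μ.map Y) :=
          (lintegral_add_compl _ measurableSet_Iic).symm
      _ ≤ (k * ∫⁻ y in Set.Iic t, μ {ω | W ω > u - y} ∂(μ.map Y)) +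
            (μ.map Y) (Set.Iic t)ᶜ := by
          refine add_le_add ?_ ?_
          · calc ∫⁻ y in Set.Iic t, μ {ω | Z ω > u - y} ∂(μ.map Y)
                ≤ ∫⁻ y in Set.Iic t, k * μ {ω | W ω > u - y} ∂(μ.map Y) :=
                  setLIntegral_mono (hmW.const_mul k) hpt
              _ = k * ∫⁻ y in Set.Iic t, μ {ω | W ω > u - y} ∂(μ.map Y) :=
                  lintegral_const_mul k hmW
          · calc ∫⁻ y in (Set.Iic t)ᶜ, μ {ω | Z ω > u - y} ∂(μ.map Y)
                ≤ ∫⁻ _ in (Set.Iic t)ᶜ, 1 ∂(μ.map Y) :=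
                  lintegral_mono fun y => prob_le_one
              _ = (μ.map Y) (Set.Iic t)ᶜ := setLIntegral_one _
      _ ≤ k * μ {ω | Y ω + W ω > u} + μ {ω | Y ω > t} := by
          refine add_le_add ?_ hnuIoi.le
          rw [hBeq]
          exact mul_le_mul_right (setLIntegral_le_lintegral _ _) k
  have hBne : μ {ω | Y ω + W ω > u} ≠ ⊤ := measure_ne_top μ _
  have hkne : k ≠ ⊤ := ENNReal.ofReal_ne_top
  have hA_le : (μ {ω | Y ω + Z ω > u}).toReal ≤
      (1 + ε / 2) * (μ {ω | Y ω + W ω > u}).toReal + (μ {ω | Y ω > t}).toReal := by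
    have h := ENNReal.toReal_mono
      (ENNReal.add_ne_top.mpr ⟨ENNReal.mul_ne_top hkne hBne, measure_ne_top μ _⟩) hsplit
    rwa [ENNReal.toReal_add (ENNReal.mul_ne_top hkne hBne) (measure_ne_top μ _),
      ENNReal.toReal_mul, hkdef, ENNReal.toReal_ofReal (by linarith)] at h
  have h2 : (μ {ω | Y ω > t}).toReal ≤ δ * (μ {ω | Y ω > t - a}).toReal := by
    have h := hv₀ _ hta
    rw [sub_add_cancel] at h
    exact h
  have hinter : μ (Y ⁻¹' Set.Ioi (t - a) ∩ W ⁻¹' Set.Ioi (u₀ + a)) =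
      μ {ω | Y ω > t - a} * c :=
    hYW.measure_inter_preimage_eq_mul _ _ measurableSet_Ioi measurableSet_Ioi
  have hsub : Y ⁻¹' Set.Ioi (t - a) ∩ W ⁻¹' Set.Ioi (u₀ + a) ⊆ {ω | Y ω + W ω > u} := by
    rintro ω ⟨h₁, h₂⟩
    simp only [Set.mem_preimage, Set.mem_Ioi] at h₁ h₂
    simp only [Set.mem_setOf_eq]
    rw [htdef] at h₁
    linarith
  have h3 : δ * (μ {ω | Y ω > t - a}).toReal ≤
      (ε / 2) * (μ {ω | Y ω + W ω > u}).toReal := by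
    have hmono : μ {ω | Y ω > t - a} * c ≤ μ {ω | Y ω + W ω > u} := by
      rw [← hinter]; exact measure_mono hsub
    have h4 := ENNReal.toReal_mono hBne hmono
    rw [ENNReal.toReal_mul] at h4
    calc δ * (μ {ω | Y ω > t - a}).toReal
        = (ε / 2) * ((μ {ω | Y ω > t - a}).toReal * c.toReal) := by rw [hδdef]; ring
      _ ≤ (ε / 2) * (μ {ω | Y ω + W ω > u}).toReal :=
          mul_le_mul_of_nonneg_left h4 (by linarith)
  have hBnn : (0 : ℝ) ≤ (μ {ω | Y ω + W ω > u}).toReal := ENNReal.toReal_nonneg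
  linarith

end aux

theorem comparison_lemma_eq
    {Ω : Type*} [MeasurableSpace Ω] (μ : Measure Ω) [IsProbabilityMeasure μ]
    (Z W Y : Ω → ℝ) (hZ : Measurable Z) (hW : Measurable W) (hY : Measurable Y)
    (hYZ : IndepFun Y Z μ) (hYW : IndepFun Y W μ)
    (hZpos : ∀ u : ℝ, 0 < u → 0 < (μ {ω | Z ω > u}).toReal)
    (hWpos : ∀ u : ℝ, 0 < u → 0 < (μ {ω | W ω > u}).toReal)
    (hYpos : ∀ u : ℝ, 0 < (μ {ω | Y ω > u}).toReal)
    (a : ℝ) (ha : 0 < a)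
    (hYtail : Tendsto (fun u : ℝ =>
        (μ {ω | Y ω > u + a}).toReal / (μ {ω | Y ω > u}).toReal) atTop (nhds 0))
    (hZW : Tendsto (fun u : ℝ =>
        (μ {ω | Z ω > u}).toReal / (μ {ω | W ω > u}).toReal) atTop (nhds 1)) :
    Tendsto (fun u : ℝ =>
        (μ {ω | Y ω + Z ω > u}).toReal / (μ {ω | Y ω + W ω > u}).toReal)
      atTop (nhds 1) := by
  have hApos : ∀ u : ℝ, 0 < (μ {ω | Y ω + Z ω > u}).toReal :=
    sum_tail_pos μ hZ hY hYZ hZpos hYpos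
  have hBpos : ∀ u : ℝ, 0 < (μ {ω | Y ω + W ω > u}).toReal :=
    sum_tail_pos μ hW hY hYW hWpos hYpos
  have hWZ : Tendsto (fun u : ℝ =>
      (μ {ω | W ω > u}).toReal / (μ {ω | Z ω > u}).toReal) atTop (nhds 1) := by
    have h := hZW.inv₀ one_ne_zero
    rw [inv_one] at h
    refine h.congr fun u => ?_
    rw [inv_div]
  rw [Metric.tendsto_nhds]
  intro ε hε
  set ε' : ℝ := ε / 2 with hε'def
  have hε' : 0 < ε' := by positivity
  have hZWe : ∀ᶠ v in atTop,
      (μ {ω | Z ω > v}).toReal ≤ (1 + ε' / 2) * (μ {ω | W ω > v}).toReal := by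
    filter_upwards [hZW.eventually (eventually_le_nhds (show (1:ℝ) < 1 + ε' / 2 by linarith)),
      eventually_gt_atTop (0:ℝ)] with v h1 h2
    exact (div_le_iff₀ (hWpos v h2)).mp h1
  have hWZe : ∀ᶠ v in atTop,
      (μ {ω | W ω > v}).toReal ≤ (1 + ε' / 2) * (μ {ω | Z ω > v}).toReal := by
    filter_upwards [hWZ.eventually (eventually_le_nhds (show (1:ℝ) < 1 + ε' / 2 by linarith)),
      eventually_gt_atTop (0:ℝ)] with v h1 h2
    exact (div_le_iff₀ (hZpos v h2)).mp h1
  have h1 := one_sided μ hZ hW hY hYZ hYW hWpos hYpos ha hYtail hε' hZWe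
  have h2 := one_sided μ hW hZ hY hYW hYZ hZpos hYpos ha hYtail hε' hWZe
  filter_upwards [h1, h2] with u hu1 hu2
  rw [Real.dist_eq, abs_lt]
  have hA := hApos u
  have hB := hBpos u
  have hup : (μ {ω | Y ω + Z ω > u}).toReal / (μ {ω | Y ω + W ω > u}).toReal ≤ 1 + ε' :=
    (div_le_iff₀ hB).mpr hu1
  have hlow : 1 - ε' ≤
      (μ {ω | Y ω + Z ω > u}).toReal / (μ {ω | Y ω + W ω > u}).toReal := by
    rw [le_div_iff₀ hB]
    by_cases hc : ε' ≤ 1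
    · have h3 := mul_le_mul_of_nonneg_left hu2 (by linarith : (0:ℝ) ≤ 1 - ε')
      nlinarith [hA, mul_nonneg (sq_nonneg ε') hA.le]
    · nlinarith [mul_pos hB (show (0:ℝ) < ε' - 1 by linarith)]
  constructor <;> linarith
end

section
/- Let Z, W, Y be real random variables with Y independent of both Z and W, P(W>u)>0 and P(Y>u)>0 for all u>0, and suppose for some a>0, lim_{u→∞} P(Y>u+a)/P(Y>u) = 0. If lim_{u→∞} P(Z>u)/P(W>u) = 0, then lim_{u→∞} P(Y+Z>u)/P(Y+W>u) = 0. -/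
open MeasureTheory ProbabilityTheory Filter Set
open scoped ENNReal Topology

/-!
Let ν, ρ, ρ' be the laws of `Y`, `Z`, `W`; the tails of `Y + Z` and `Y + W` are the tails of
`ν ∗ ρ` and `ν ∗ ρ'`. If `ρ (t, ∞) ≤ ε ρ' (t, ∞)` for `t ≥ M`, splitting the convolution integral
at `y = u - M` gives `P(Y + Z > u) ≤ ε P(Y + W > u) + P(Y > u - M)`, and independence gives
`P(Y + W > u) ≥ P(Y > u - M - a) P(W > M + a)`. The tail condition on `Y` makes `P(Y > u - M)`
negligible against `P(Y > u - M - a)`, hence against `P(Y + W > u)`.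
-/

section TailRatio

variable {α : Type*} {l : Filter α} {f g : α → ℝ≥0∞}

lemma eventually_le_ofReal_mul_of_tendsto_toReal_div (hf : ∀ x, f x ≠ ∞)
    (hg : ∀ᶠ x in l, 0 < (g x).toReal)
    (h : Tendsto (fun x => (f x).toReal / (g x).toReal) l (𝓝 0)) {ε : ℝ} (hε : 0 < ε) :
    ∀ᶠ x in l, f x ≤ ENNReal.ofReal ε * g x := by
  filter_upwards [h.eventually (gt_mem_nhds hε), hg] with x hx hgx
  rw [div_lt_iff₀ hgx] at hx
  rw [← ENNReal.ofReal_toReal (hf x), ← ENNReal.ofReal_toReal (ENNReal.toReal_pos_iff.1 hgx).2.ne,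
    ← ENNReal.ofReal_mul hε.le]
  exact ENNReal.ofReal_le_ofReal hx.le

lemma tendsto_toReal_div_of_eventually_le_ofReal_mul (hg : ∀ x, g x ≠ ∞)
    (h : ∀ ε > 0, ∀ᶠ x in l, f x ≤ ENNReal.ofReal ε * g x) :
    Tendsto (fun x => (f x).toReal / (g x).toReal) l (𝓝 0) := by
  refine tendsto_order.2 ⟨fun b hb => Eventually.of_forall fun x => hb.trans_le (by positivity),
    fun ε hε => ?_⟩
  filter_upwards [h (ε / 2) (half_pos hε)] with x hx
  have hle : (f x).toReal ≤ ε / 2 * (g x).toReal := by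
    simpa [ENNReal.toReal_mul, (half_pos hε).le] using
      ENNReal.toReal_mono (ENNReal.mul_ne_top ENNReal.ofReal_ne_top (hg x)) hx
  exact (div_le_of_le_mul₀ ENNReal.toReal_nonneg (half_pos hε).le hle).trans_lt (half_lt_self hε)

end TailRatio

section Convolution

variable (ν ρ ρ' : Measure ℝ)

lemma conv_apply_Ioi [SFinite ρ] (u : ℝ) : (ν ∗ ρ) (Ioi u) = ∫⁻ y, ρ (Ioi (u - y)) ∂ν := by
  rw [Measure.conv, Measure.map_apply (by fun_prop) measurableSet_Ioi,
    Measure.prod_apply (measurableSet_Ioi.preimage (by fun_prop))]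
  congr! with y
  ext x
  simp [sub_lt_iff_lt_add']

lemma measure_Ioi_mul_le_conv_apply_Ioi [SFinite ρ] (s r : ℝ) :
    ν (Ioi s) * ρ (Ioi r) ≤ (ν ∗ ρ) (Ioi (s + r)) :=
  calc ν (Ioi s) * ρ (Ioi r) = ∫⁻ _ in Ioi s, ρ (Ioi r) ∂ν := by rw [setLIntegral_const, mul_comm]
    _ ≤ ∫⁻ y in Ioi s, ρ (Ioi (s + r - y)) ∂ν :=
      setLIntegral_mono' measurableSet_Ioi fun y hy =>
        measure_mono (Ioi_subset_Ioi (by linarith [mem_Ioi.1 hy]))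
    _ ≤ ∫⁻ y, ρ (Ioi (s + r - y)) ∂ν := setLIntegral_le_lintegral _ _
    _ = (ν ∗ ρ) (Ioi (s + r)) := (conv_apply_Ioi ν ρ _).symm

lemma conv_apply_Ioi_le_of_forall_ge [IsProbabilityMeasure ρ] [SFinite ρ'] {ε : ℝ≥0∞} {M : ℝ}
    (h : ∀ t ≥ M, ρ (Ioi t) ≤ ε * ρ' (Ioi t)) (u : ℝ) :
    (ν ∗ ρ) (Ioi u) ≤ ε * (ν ∗ ρ') (Ioi u) + ν (Ioi (u - M)) := by
  have hpt (y : ℝ) : ρ (Ioi (u - y)) ≤ ε * ρ' (Ioi (u - y)) + (Ioi (u - M)).indicator 1 y := by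
    rcases lt_or_ge (u - M) y with hy | hy
    · rw [indicator_of_mem (mem_Ioi.2 hy), Pi.one_apply]
      exact prob_le_one.trans le_add_self
    · rw [indicator_of_notMem (notMem_Ioi.2 hy), add_zero]
      exact h _ (by linarith)
  have hmono : Monotone fun y => ρ' (Ioi (u - y)) := fun y₁ y₂ hy =>
    measure_mono (Ioi_subset_Ioi (by linarith))
  have hmeas := hmono.measurable
  rw [conv_apply_Ioi, conv_apply_Ioi, ← lintegral_const_mul _ hmeas,
    ← lintegral_indicator_one measurableSet_Ioi, ← lintegral_add_left (hmeas.const_mul ε)]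
  exact lintegral_mono hpt

end Convolution

theorem tendsto_conv_Ioi_ratio_zero {ν ρ ρ' : Measure ℝ} [IsFiniteMeasure ν]
    [IsProbabilityMeasure ρ] [IsFiniteMeasure ρ'] {a : ℝ}
    (hνpos : ∀ᶠ u in atTop, 0 < (ν (Ioi u)).toReal)
    (hρ'pos : ∀ᶠ u in atTop, 0 < (ρ' (Ioi u)).toReal)
    (hν : Tendsto (fun u => (ν (Ioi (u + a))).toReal / (ν (Ioi u)).toReal) atTop (𝓝 0))
    (hρ : Tendsto (fun u => (ρ (Ioi u)).toReal / (ρ' (Ioi u)).toReal) atTop (𝓝 0)) :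
    Tendsto (fun u => ((ν ∗ ρ) (Ioi u)).toReal / ((ν ∗ ρ') (Ioi u)).toReal) atTop (𝓝 0) := by
  refine tendsto_toReal_div_of_eventually_le_ofReal_mul (fun _ => measure_ne_top _ _)
    fun ε hε => ?_
  obtain ⟨M, hM, hq⟩ : ∃ M, (∀ t ≥ M, ρ (Ioi t) ≤ ENNReal.ofReal (ε / 2) * ρ' (Ioi t)) ∧
      0 < (ρ' (Ioi (M + a))).toReal :=
    ((eventually_forall_ge_atTop.2 <| eventually_le_ofReal_mul_of_tendsto_toReal_div
      (fun _ => measure_ne_top _ _) hρ'pos hρ (half_pos hε)).and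
      ((tendsto_atTop_add_const_right _ a tendsto_id).eventually hρ'pos)).exists
  have hν' := (tendsto_atTop_add_const_right _ (-(M + a)) tendsto_id).eventually
    (eventually_le_ofReal_mul_of_tendsto_toReal_div (fun _ => measure_ne_top _ _) hνpos hν
      (mul_pos (half_pos hε) hq))
  filter_upwards [hν'] with u hu
  simp only [← sub_eq_add_neg] at hu
  have hshift : ν (Ioi (u - M)) ≤ ENNReal.ofReal (ε / 2) * (ν ∗ ρ') (Ioi u) :=
    calc ν (Ioi (u - M)) = ν (Ioi (u - (M + a) + a)) := by congr 2; ring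
      _ ≤ ENNReal.ofReal (ε / 2 * (ρ' (Ioi (M + a))).toReal) * ν (Ioi (u - (M + a))) := hu
      _ = ENNReal.ofReal (ε / 2) * (ν (Ioi (u - (M + a))) * ρ' (Ioi (M + a))) := by
        rw [ENNReal.ofReal_mul (half_pos hε).le, ENNReal.ofReal_toReal (measure_ne_top _ _)]
        ring
      _ ≤ ENNReal.ofReal (ε / 2) * (ν ∗ ρ') (Ioi (u - (M + a) + (M + a))) := by
        gcongr
        exact measure_Ioi_mul_le_conv_apply_Ioi ν ρ' _ _
      _ = ENNReal.ofReal (ε / 2) * (ν ∗ ρ') (Ioi u) := by rw [sub_add_cancel]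
  calc (ν ∗ ρ) (Ioi u) ≤ ENNReal.ofReal (ε / 2) * (ν ∗ ρ') (Ioi u) + ν (Ioi (u - M)) :=
        conv_apply_Ioi_le_of_forall_ge ν ρ ρ' hM u
    _ ≤ (ENNReal.ofReal (ε / 2) + ENNReal.ofReal (ε / 2)) * (ν ∗ ρ') (Ioi u) := by
        rw [add_mul]
        gcongr
    _ = ENNReal.ofReal ε * (ν ∗ ρ') (Ioi u) := by
        rw [← ENNReal.ofReal_add (half_pos hε).le (half_pos hε).le, add_halves]

theorem comparison_lemma_zero_general
    {Ω : Type*} [MeasurableSpace Ω] (μ : Measure Ω) [IsProbabilityMeasure μ]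
    (Z W Y : Ω → ℝ) (hZ : Measurable Z) (hW : Measurable W) (hY : Measurable Y)
    (hYZ : IndepFun Y Z μ) (hYW : IndepFun Y W μ)
    (hWpos : ∀ u : ℝ, 0 < u → 0 < (μ {ω | W ω > u}).toReal)
    (hYpos : ∀ u : ℝ, 0 < u → 0 < (μ {ω | Y ω > u}).toReal)
    (a : ℝ)
    (hYtail : Tendsto (fun u : ℝ =>
        (μ {ω | Y ω > u + a}).toReal / (μ {ω | Y ω > u}).toReal) atTop (nhds 0))
    (hZW : Tendsto (fun u : ℝ =>
        (μ {ω | Z ω > u}).toReal / (μ {ω | W ω > u}).toReal) atTop (nhds 0)) :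
    Tendsto (fun u : ℝ =>
        (μ {ω | Y ω + Z ω > u}).toReal / (μ {ω | Y ω + W ω > u}).toReal)
      atTop (nhds 0) := by
  have hlaw {X : Ω → ℝ} (hX : Measurable X) (u : ℝ) : μ {ω | X ω > u} = μ.map X (Ioi u) :=
    (Measure.map_apply hX measurableSet_Ioi).symm
  have hsum {X : Ω → ℝ} (hX : Measurable X) (hYX : IndepFun Y X μ) (u : ℝ) :
      μ {ω | Y ω + X ω > u} = (μ.map Y ∗ μ.map X) (Ioi u) := by
    rw [← hYX.map_add_eq_map_conv_map hY hX, Measure.map_apply (hY.add hX) measurableSet_Ioi]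
    rfl
  have := Measure.isProbabilityMeasure_map (μ := μ) hZ.aemeasurable
  simp only [hsum hZ hYZ, hsum hW hYW, hlaw hY, hlaw hZ, hlaw hW] at hWpos hYpos hYtail hZW ⊢
  exact tendsto_conv_Ioi_ratio_zero (eventually_gt_atTop 0 |>.mono hYpos)
    (eventually_gt_atTop 0 |>.mono hWpos) hYtail hZW

theorem comparison_lemma_zero
    {Ω : Type*} [MeasurableSpace Ω] (μ : Measure Ω) [IsProbabilityMeasure μ]
    (Z W Y : Ω → ℝ) (hZ : Measurable Z) (hW : Measurable W) (hY : Measurable Y)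
    (hYZ : IndepFun Y Z μ) (hYW : IndepFun Y W μ)
    (hWpos : ∀ u : ℝ, 0 < u → 0 < (μ {ω | W ω > u}).toReal)
    (hYpos : ∀ u : ℝ, 0 < u → 0 < (μ {ω | Y ω > u}).toReal)
    (a : ℝ) (ha : 0 < a)
    (hYtail : Tendsto (fun u : ℝ =>
        (μ {ω | Y ω > u + a}).toReal / (μ {ω | Y ω > u}).toReal) atTop (nhds 0))
    (hZW : Tendsto (fun u : ℝ =>
        (μ {ω | Z ω > u}).toReal / (μ {ω | W ω > u}).toReal) atTop (nhds 0)) :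
    Tendsto (fun u : ℝ =>
        (μ {ω | Y ω + Z ω > u}).toReal / (μ {ω | Y ω + W ω > u}).toReal)
      atTop (nhds 0) :=
  comparison_lemma_zero_general μ Z W Y hZ hW hY hYZ hYW hWpos hYpos a hYtail hZW
end

section
/- Let {X_k} be i.i.d. real random variables with partial sums S_k = X₁+⋯+X_k, let Y be independent of the X_k, and suppose: (i) the X_k are a.s. bounded above by a constant A>0 and P(X₁>α)>0 for some α>0; (ii) P(Y>u)>0 for all u and for some a with 0<a≤α, lim_{u→∞} P(Y>u+a)/P(Y>u) = 0. Then for every k≥1, lim_{u→∞} P(Y+S_k>u)/P(Y+S_{k+1}>u) = 0. -/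
open MeasureTheory ProbabilityTheory Filter Finset

/-!
Write `T k = Y + S k` and let `ρ` be the law of `X 0`. As `S k ≤ k A`, the law of `T k` is the
law of `Y` convolved with a law carried by `(-∞, k A]`, and such a convolution inherits the rapid
tail decay `P(T > u + a) = o(P(T > u))`. Then `P(T (k+1) > u) ≥ P(T k > u - α) ρ(α, ∞)` while
`P(T k > u) ≤ P(T k > u - α + a) = o(P(T k > u - α))`, because `a ≤ α`.
-/

open Set ENNReal Topology

namespace MeasureTheory.Measure

/-- The rapid tail-decay condition: `ν (u + a, ∞) = o(ν (u, ∞))` as `u → ∞`. -/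
def HasRapidTailDecay (ν : Measure ℝ) (a : ℝ) : Prop :=
  ∀ δ : ℝ≥0∞, 0 < δ → ∀ᶠ u in atTop, ν (Ioi (u + a)) ≤ δ * ν (Ioi u)

lemma hasRapidTailDecay_of_tendsto_toReal_div {ν : Measure ℝ} [IsFiniteMeasure ν] {a : ℝ}
    (hpos : ∀ u, ν (Ioi u) ≠ 0)
    (h : Tendsto (fun u => (ν (Ioi (u + a))).toReal / (ν (Ioi u)).toReal) atTop (𝓝 0)) :
    ν.HasRapidTailDecay a := by
  simp_rw [← toReal_div] at h
  have h' : Tendsto (fun u => ν (Ioi (u + a)) / ν (Ioi u)) atTop (𝓝 0) :=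
    (tendsto_toReal_iff (fun u => div_ne_top (measure_ne_top _ _) (hpos u)) zero_ne_top).1
      (by simpa using h)
  intro δ hδ
  filter_upwards [(tendsto_order.1 h').2 δ hδ] with u hu
  exact (ENNReal.div_le_iff (hpos u) (measure_ne_top _ _)).1 hu.le

lemma conv_apply_Ioi (ν ρ : Measure ℝ) [SFinite ν] [SFinite ρ] (u : ℝ) :
    (ν ∗ ρ) (Ioi u) = ∫⁻ y, ν (Ioi (u - y)) ∂ρ := by
  have hs : MeasurableSet ((fun p : ℝ × ℝ => p.1 + p.2) ⁻¹' Ioi u) :=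
    measurable_add measurableSet_Ioi
  rw [conv, map_apply measurable_add measurableSet_Ioi, prod_apply_symm hs]
  congr! with y
  ext x
  simp [sub_lt_iff_lt_add]

lemma mul_le_conv_Ioi_add (ν ρ : Measure ℝ) [SFinite ρ] (s t : ℝ) :
    ν (Ioi s) * ρ (Ioi t) ≤ (ν ∗ ρ) (Ioi (s + t)) := by
  rw [conv, map_apply measurable_add measurableSet_Ioi, ← prod_prod]
  refine measure_mono fun p hp => ?_
  simp only [mem_prod, Set.mem_Ioi] at hp
  simp only [Set.mem_preimage, Set.mem_Ioi]
  linarith [hp.1, hp.2]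

lemma HasRapidTailDecay.conv_of_ae_le {ν ρ : Measure ℝ} [SFinite ν] [SFinite ρ] {a B : ℝ}
    (hν : ν.HasRapidTailDecay a) (hρ : ∀ᵐ y ∂ρ, y ≤ B) : (ν ∗ ρ).HasRapidTailDecay a := by
  intro δ hδ
  obtain ⟨M, hM⟩ := eventually_atTop.1 (hν δ hδ)
  filter_upwards [eventually_ge_atTop (M + B)] with u hu
  calc (ν ∗ ρ) (Ioi (u + a)) = ∫⁻ y, ν (Ioi ((u - y) + a)) ∂ρ := by
        simp_rw [conv_apply_Ioi, sub_add_eq_add_sub]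
    _ ≤ ∫⁻ y, δ * ν (Ioi (u - y)) ∂ρ :=
        lintegral_mono_ae (hρ.mono fun y hy => hM _ (by linarith))
    _ = δ * (ν ∗ ρ) (Ioi u) := by
        have hmono : Monotone fun y => ν (Ioi (u - y)) := fun y z hyz =>
          measure_mono (Ioi_subset_Ioi (by linarith))
        rw [lintegral_const_mul _ hmono.measurable, conv_apply_Ioi]

lemma HasRapidTailDecay.tendsto_div_conv {ν ρ : Measure ℝ} [SFinite ρ] {a α : ℝ}
    (hν : ν.HasRapidTailDecay a) (haα : a ≤ α) (hρ : ρ (Ioi α) ≠ 0) :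
    Tendsto (fun u => ν (Ioi u) / (ν ∗ ρ) (Ioi u)) atTop (𝓝 0) := by
  refine ENNReal.tendsto_nhds_zero.2 fun ε hε => ?_
  have hshift : Tendsto (fun u : ℝ => u - α) atTop atTop :=
    tendsto_atTop_add_const_right _ _ tendsto_id
  filter_upwards [hshift.eventually (hν (ε * ρ (Ioi α)) (ENNReal.mul_pos hε.ne' hρ))] with u hu
  refine div_le_of_le_mul ?_
  calc ν (Ioi u) ≤ ν (Ioi (u - α + a)) := measure_mono (Ioi_subset_Ioi (by linarith))
    _ ≤ ε * ρ (Ioi α) * ν (Ioi (u - α)) := hu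
    _ = ε * (ν (Ioi (u - α)) * ρ (Ioi α)) := by ring
    _ ≤ ε * (ν ∗ ρ) (Ioi u) := by
        gcongr
        simpa using mul_le_conv_Ioi_add ν ρ (u - α) α

end MeasureTheory.Measure

namespace ProbabilityTheory

variable {Ω : Type*} [MeasurableSpace Ω] {μ : Measure Ω}

lemma map_apply_Ioi {f : Ω → ℝ} (hf : Measurable f) (u : ℝ) :
    μ.map f (Ioi u) = μ {ω | f ω > u} :=
  Measure.map_apply hf measurableSet_Ioi

section PartialSums

variable [IsProbabilityMeasure μ] {X : ℕ → Ω → ℝ} {Y : Ω → ℝ}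

lemma map_add_sum_range (hX : ∀ k, Measurable (X k)) (hY : Measurable Y)
    (hYindep : IndepFun Y (fun ω k => X k ω) μ) (n : ℕ) :
    μ.map (fun ω => Y ω + ∑ i ∈ range n, X i ω) =
      μ.map Y ∗ μ.map (fun ω => ∑ i ∈ range n, X i ω) :=
  (hYindep.comp measurable_id (Finset.measurable_sum _ fun i _ => measurable_pi_apply i)
    ).map_add_eq_map_conv_map hY (Finset.measurable_sum _ fun i _ => hX i)

lemma map_add_sum_range_succ (hX : ∀ k, Measurable (X k)) (hY : Measurable Y)
    (hYindep : IndepFun Y (fun ω k => X k ω) μ) (hXindep : iIndepFun X μ) (k : ℕ) :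
    μ.map (fun ω => Y ω + ∑ i ∈ range (k + 1), X i ω) =
      μ.map (fun ω => Y ω + ∑ i ∈ range k, X i ω) ∗ μ.map (X k) := by
  have hSX : IndepFun (fun ω => ∑ i ∈ range k, X i ω) (X k) μ := by
    simpa [Finset.sum_fn] using hXindep.indepFun_sum_range_succ hX k
  have hsucc : (fun ω => ∑ i ∈ range (k + 1), X i ω) =
      (fun ω => ∑ i ∈ range k, X i ω) + X k := by
    ext ω; simp [Finset.sum_range_succ]
  rw [map_add_sum_range hX hY hYindep, map_add_sum_range hX hY hYindep, hsucc,
    hSX.map_add_eq_map_conv_map (Finset.measurable_sum _ fun i _ => hX i) (hX k),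
    Measure.conv_assoc]

end PartialSums

end ProbabilityTheory

theorem lemma_Y_bounded_case_general
    {Ω : Type*} [MeasurableSpace Ω] (μ : Measure Ω) [IsProbabilityMeasure μ]
    (X : ℕ → Ω → ℝ) (Y : Ω → ℝ)
    (hXmeas : ∀ k, Measurable (X k)) (hYmeas : Measurable Y)
    (hXindep : iIndepFun X μ)
    (hXid : ∀ k, Measure.map (X k) μ = Measure.map (X 0) μ)
    (hYindep : IndepFun Y (fun ω => fun k => X k ω) μ)
    (A α a : ℝ) (haα : a ≤ α)
    (hbdd : ∀ k, ∀ᵐ ω ∂μ, X k ω ≤ A)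
    (hXα : 0 < (μ {ω | X 0 ω > α}).toReal)
    (hYpos : ∀ u : ℝ, 0 < (μ {ω | Y ω > u}).toReal)
    (hYtail : Tendsto (fun u : ℝ =>
        (μ {ω | Y ω > u + a}).toReal / (μ {ω | Y ω > u}).toReal) atTop (nhds 0)) :
    ∀ k : ℕ, 1 ≤ k →
      Tendsto (fun u : ℝ =>
          (μ {ω | Y ω + ∑ i ∈ range k, X i ω > u}).toReal /
            (μ {ω | Y ω + ∑ i ∈ range (k + 1), X i ω > u}).toReal)
        atTop (nhds 0) := by
  intro k _
  have hS : ∀ n, Measurable fun ω => ∑ i ∈ range n, X i ω :=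
    fun n => Finset.measurable_sum _ fun i _ => hXmeas i
  have hT : ∀ n, Measurable fun ω => Y ω + ∑ i ∈ range n, X i ω := fun n => hYmeas.add (hS n)
  have hY : (μ.map Y).HasRapidTailDecay a := by
    refine Measure.hasRapidTailDecay_of_tendsto_toReal_div (fun u => ?_) ?_
    · rw [map_apply_Ioi hYmeas]
      exact (ENNReal.toReal_pos_iff.1 (hYpos u)).1.ne'
    · simpa only [map_apply_Ioi hYmeas] using hYtail
  have hSbdd : ∀ᵐ s ∂μ.map (fun ω => ∑ i ∈ range k, X i ω), s ≤ k * A := by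
    rw [ae_map_iff (hS k).aemeasurable measurableSet_Iic]
    filter_upwards [ae_all_iff.2 hbdd] with ω hω
    simpa using Finset.sum_le_sum fun i (_ : i ∈ range k) => hω i
  have hdecay : (μ.map fun ω => Y ω + ∑ i ∈ range k, X i ω).HasRapidTailDecay a := by
    rw [map_add_sum_range hXmeas hYmeas hYindep]
    exact hY.conv_of_ae_le hSbdd
  have hρ : μ.map (X k) (Ioi α) ≠ 0 := by
    rw [hXid, map_apply_Ioi (hXmeas 0)]
    exact (ENNReal.toReal_pos_iff.1 hXα).1.ne'
  have := (ENNReal.tendsto_toReal zero_ne_top).comp (hdecay.tendsto_div_conv haα hρ)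
  rw [← map_add_sum_range_succ hXmeas hYmeas hYindep hXindep k] at this
  simpa only [Function.comp_def, toReal_div, toReal_zero, map_apply_Ioi (hT _)] using this

theorem lemma_Y_bounded_case
    {Ω : Type*} [MeasurableSpace Ω] (μ : Measure Ω) [IsProbabilityMeasure μ]
    (X : ℕ → Ω → ℝ) (Y : Ω → ℝ)
    (hXmeas : ∀ k, Measurable (X k)) (hYmeas : Measurable Y)
    (hXindep : iIndepFun X μ)
    (hXid : ∀ k, Measure.map (X k) μ = Measure.map (X 0) μ)
    (hYindep : IndepFun Y (fun ω => fun k => X k ω) μ)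
    (A α a : ℝ) (hA : 0 < A) (hα : 0 < α) (ha : 0 < a) (haα : a ≤ α)
    (hbdd : ∀ k, ∀ᵐ ω ∂μ, X k ω ≤ A)
    (hXα : 0 < (μ {ω | X 0 ω > α}).toReal)
    (hYpos : ∀ u : ℝ, 0 < (μ {ω | Y ω > u}).toReal)
    (hYtail : Tendsto (fun u : ℝ =>
        (μ {ω | Y ω > u + a}).toReal / (μ {ω | Y ω > u}).toReal) atTop (nhds 0)) :
    ∀ k : ℕ, 1 ≤ k →
      Tendsto (fun u : ℝ =>
          (μ {ω | Y ω + ∑ i ∈ range k, X i ω > u}).toReal /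
            (μ {ω | Y ω + ∑ i ∈ range (k + 1), X i ω > u}).toReal)
        atTop (nhds 0) :=
  lemma_Y_bounded_case_general μ X Y hXmeas hYmeas hXindep hXid hYindep A α a haα hbdd hXα hYpos
    hYtail
end

section
/- Let {X_k} be i.i.d. real random variables satisfying P(X₁>u)>0 for all u>0 and lim_{u→∞} P(X₁>u+a)/P(X₁>u)=0 for some a>0. Then for each fixed ε>0 there exists B>0 such that for all k≥3 and all u>0: P(S_k > u+a) ≤ ε·P(S_k>u) + P(S_{k−1}>u)/P(X₁>B), where S_k = X₁+⋯+X_k. -/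
/-!
Let `τ v = P(X₁ > v)` and split `{S_k > u + a}` according to whether `S_{k-1} ≤ u - B₀`, where
beyond `B₀` the tail ratio `τ(v + a)/τ(v)` is below `ε/2`. On `{S_{k-1} ≤ u - B₀}`, conditioning on
`S_{k-1}` costs the factor `ε/2` for raising `u` to `u + a`, giving `(ε/2) P(S_k > u)`.
For `{S_{k-1} > u - B₀}` write `S_{k-1} = S_{k-2} + X_{k-1}` and bound `τ(t - B₀)` pointwise:
if `t ≤ B` it is at most `1 ≤ τ(t)/τ(B)`, and if `t > B` the tail condition, now with ratio
`(ε/2) τ(B₀ + a)` beyond `B - B₀ - a`, gives `τ(t - B₀) ≤ (ε/2) τ(t - B₀ - a) τ(B₀ + a)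
≤ (ε/2) P(X_{k-1} + X_k > t)`. Conditioning on `S_{k-2}` turns this into
`(ε/2) P(S_k > u) + P(S_{k-1} > u)/τ(B)`.
-/

open MeasureTheory ProbabilityTheory Filter Set
open scoped ENNReal Topology

theorem measurable_measure_Ioi_sub (ν : Measure ℝ) (u : ℝ) :
    Measurable fun y => ν (Ioi (u - y)) :=
  Monotone.measurable fun _ _ hxy => measure_mono (Ioi_subset_Ioi (by linarith))

namespace ProbabilityTheory

variable {Ω : Type*} [MeasurableSpace Ω] {μ : Measure Ω}

theorem iIndepFun.indepFun_finsetSum_finsetSum {ι : Type*} {X : ι → Ω → ℝ} (h : iIndepFun X μ)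
    (hX : ∀ i, Measurable (X i)) (s t : Finset ι) (hst : Disjoint s t) :
    IndepFun (fun ω => ∑ i ∈ s, X i ω) (fun ω => ∑ i ∈ t, X i ω) μ := by
  have hsum : ∀ s : Finset ι, Measurable fun v : s → ℝ => ∑ i, v i := fun s =>
    Finset.measurable_sum _ fun i _ => measurable_pi_apply i
  convert (h.indepFun_finset s t hst hX).comp (hsum s) (hsum t) using 1 <;>
    exact funext fun ω => (Finset.sum_coe_sort _ _).symm

theorem IndepFun.measure_lt_mul_measure_lt_le {Y Z : Ω → ℝ} (h : IndepFun Y Z μ) (s t : ℝ) :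
    μ {ω | s < Y ω} * μ {ω | t < Z ω} ≤ μ {ω | s + t < Y ω + Z ω} := by
  refine (h.measure_inter_preimage_eq_mul _ _ measurableSet_Ioi measurableSet_Ioi).symm.trans_le ?_
  exact measure_mono fun ω hω => show s + t < Y ω + Z ω from add_lt_add hω.1 hω.2

variable [IsFiniteMeasure μ]

theorem IndepFun.measure_preimage_prodMk_eq_lintegral {β γ : Type*} [MeasurableSpace β]
    [MeasurableSpace γ] {Y : Ω → β} {Z : Ω → γ} (h : IndepFun Y Z μ) (hY : Measurable Y)
    (hZ : Measurable Z) {S : Set (β × γ)} (hS : MeasurableSet S) :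
    μ {ω | (Y ω, Z ω) ∈ S} = ∫⁻ y, μ.map Z (Prod.mk y ⁻¹' S) ∂μ.map Y := by
  rw [← Measure.prod_apply hS,
    ← (indepFun_iff_map_prod_eq_prod_map_map hY.aemeasurable hZ.aemeasurable).mp h,
    Measure.map_apply (hY.prodMk hZ) hS]
  rfl

variable {Y Z : Ω → ℝ}

theorem IndepFun.measure_lt_add_eq_lintegral (h : IndepFun Y Z μ)
    (hY : Measurable Y) (hZ : Measurable Z) (u : ℝ) :
    μ {ω | u < Y ω + Z ω} = ∫⁻ y, μ.map Z (Ioi (u - y)) ∂μ.map Y := by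
  have hS : MeasurableSet {p : ℝ × ℝ | u < p.1 + p.2} :=
    measurableSet_lt measurable_const (measurable_fst.add measurable_snd)
  exact (h.measure_preimage_prodMk_eq_lintegral hY hZ hS).trans
    (lintegral_congr fun y => congrArg _ (Set.ext fun z => (sub_lt_iff_lt_add' (a := u)).symm))

theorem IndepFun.measure_le_and_lt_add_eq_setLIntegral (h : IndepFun Y Z μ)
    (hY : Measurable Y) (hZ : Measurable Z) (s u : ℝ) :
    μ {ω | Y ω ≤ s ∧ u < Y ω + Z ω} = ∫⁻ y in Iic s, μ.map Z (Ioi (u - y)) ∂μ.map Y := by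
  have hS : MeasurableSet {p : ℝ × ℝ | p.1 ≤ s ∧ u < p.1 + p.2} :=
    (measurableSet_le measurable_fst measurable_const).inter
      (measurableSet_lt measurable_const (measurable_fst.add measurable_snd))
  rw [← lintegral_indicator measurableSet_Iic]
  refine (h.measure_preimage_prodMk_eq_lintegral hY hZ hS).trans
    (lintegral_congr fun y => ?_)
  by_cases hy : y ≤ s
  · rw [indicator_of_mem (show y ∈ Iic s from hy)]
    exact congrArg _ (Set.ext fun z => (and_iff_right hy).trans sub_lt_iff_lt_add'.symm)
  · rw [indicator_of_notMem (show y ∉ Iic s from hy)]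
    exact measure_mono_null (fun z hz => hy hz.1) measure_empty

end ProbabilityTheory

theorem eventually_le_ofReal_mul_of_tendsto_div {α : Type*} {l : Filter α} {f g : α → ℝ≥0∞}
    (hf : ∀ x, f x ≠ ∞) (hg : ∀ᶠ x in l, 0 < (g x).toReal)
    (h : Tendsto (fun x => (f x).toReal / (g x).toReal) l (𝓝 0)) {δ : ℝ} (hδ : 0 < δ) :
    ∀ᶠ x in l, f x ≤ ENNReal.ofReal δ * g x := by
  filter_upwards [h.eventually (gt_mem_nhds hδ), hg] with x hlt hpos
  rw [div_lt_iff₀ hpos] at hlt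
  calc f x = ENNReal.ofReal (f x).toReal := (ENNReal.ofReal_toReal (hf x)).symm
    _ ≤ ENNReal.ofReal (δ * (g x).toReal) := ENNReal.ofReal_le_ofReal hlt.le
    _ = ENNReal.ofReal δ * g x := by
      rw [ENNReal.ofReal_mul hδ.le, ENNReal.ofReal_toReal (ENNReal.toReal_pos_iff.1 hpos).2.ne]

theorem Antitone.apply_add_le_mul_add_div {τ : ℝ → ℝ≥0∞} (hτ : Antitone τ) (hτ1 : ∀ v, τ v ≤ 1)
    {a c T B : ℝ} {K : ℝ≥0∞} (hT : ∀ v, T ≤ v → τ (v + a) ≤ K * τ v) (hB : T + c ≤ B)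
    (hB0 : τ B ≠ 0) (s : ℝ) :
    τ (s + a) ≤ K * τ s + τ (s + c) / τ B := by
  rcases le_or_gt T s with hs | hs
  · exact le_add_right (hT s hs)
  · have hBs : τ B ≤ τ (s + c) := hτ (by linarith)
    calc τ (s + a) ≤ 1 := hτ1 _
      _ ≤ τ (s + c) / τ B := by
        rw [ENNReal.le_div_iff_mul_le (.inl hB0) (.inl ((hτ1 B).trans_lt ENNReal.one_lt_top).ne),
          one_mul]
        exact hBs
      _ ≤ _ := le_add_left le_rfl

theorem ENNReal.toReal_le_mul_add_div {x y z w : ℝ≥0∞} {ε : ℝ} (hε : 0 ≤ ε) (hy : y ≠ ∞)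
    (hz : z ≠ 0) (hw : w ≠ ∞) (h : x ≤ ENNReal.ofReal ε * y + w / z) :
    x.toReal ≤ ε * y.toReal + w.toReal / z.toReal := by
  have hfin : ENNReal.ofReal ε * y ≠ ∞ := ENNReal.mul_ne_top ENNReal.ofReal_ne_top hy
  have := ENNReal.toReal_mono (ENNReal.add_ne_top.2 ⟨hfin, ENNReal.div_ne_top hw hz⟩) h
  rwa [ENNReal.toReal_add hfin (ENNReal.div_ne_top hw hz), ENNReal.toReal_mul,
    ENNReal.toReal_ofReal hε, ENNReal.toReal_div] at this

section TailEstimates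

variable {Ω : Type*} [MeasurableSpace Ω] {μ : Measure Ω} [IsFiniteMeasure μ] {ν : Measure ℝ}
  {a B₀ B : ℝ} {δ : ℝ≥0∞}

theorem measure_le_and_lt_add_le {Y W : Ω → ℝ} (hY : Measurable Y) (hW : Measurable W)
    (hYW : IndepFun Y W μ) (hWν : μ.map W = ν)
    (hB₀ : ∀ v, B₀ ≤ v → ν (Ioi (v + a)) ≤ δ * ν (Ioi v)) (u : ℝ) :
    μ {ω | Y ω ≤ u - B₀ ∧ u + a < Y ω + W ω} ≤ δ * μ {ω | u < Y ω + W ω} := by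
  rw [hYW.measure_le_and_lt_add_eq_setLIntegral hY hW, hYW.measure_lt_add_eq_lintegral hY hW,
    hWν, ← lintegral_const_mul _ (measurable_measure_Ioi_sub ν u)]
  calc ∫⁻ y in Iic (u - B₀), ν (Ioi (u + a - y)) ∂μ.map Y
      ≤ ∫⁻ y in Iic (u - B₀), δ * ν (Ioi (u - y)) ∂μ.map Y :=
        setLIntegral_mono' measurableSet_Iic fun y (hy : y ≤ u - B₀) => by
          rw [show u + a - y = u - y + a by ring]
          exact hB₀ _ (by linarith)
    _ ≤ _ := setLIntegral_le_lintegral _ _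

theorem measure_sub_lt_add_le {R W₁ W₂ : Ω → ℝ} (hR : Measurable R) (hW₁ : Measurable W₁)
    (hW₂ : Measurable W₂) (hRW₁ : IndepFun R W₁ μ)
    (hRW : IndepFun R (fun ω => W₁ ω + W₂ ω) μ) (hW₁W₂ : IndepFun W₁ W₂ μ)
    (h₁ : μ.map W₁ = ν) (h₂ : μ.map W₂ = ν)
    (hcore : ∀ s, ν (Ioi (s + a)) ≤
      δ * ν (Ioi (B₀ + a)) * ν (Ioi s) + ν (Ioi (s + (B₀ + a))) / ν (Ioi B)) (u : ℝ) :
    μ {ω | u - B₀ < R ω + W₁ ω} ≤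
      δ * μ {ω | u < R ω + W₁ ω + W₂ ω} + μ {ω | u < R ω + W₁ ω} / ν (Ioi B) := by
  have hW : Measurable fun ω => W₁ ω + W₂ ω := hW₁.add hW₂
  have hV : ∀ s t, ν (Ioi s) * ν (Ioi t) ≤ μ.map (fun ω => W₁ ω + W₂ ω) (Ioi (s + t)) := by
    intro s t
    rw [← h₁, Measure.map_apply hW₁ measurableSet_Ioi, h₁, ← h₂,
      Measure.map_apply hW₂ measurableSet_Ioi, Measure.map_apply hW measurableSet_Ioi]
    exact hW₁W₂.measure_lt_mul_measure_lt_le s t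
  simp only [add_assoc]
  rw [hRW₁.measure_lt_add_eq_lintegral hR hW₁, hRW₁.measure_lt_add_eq_lintegral hR hW₁,
    hRW.measure_lt_add_eq_lintegral hR hW, h₁]
  calc ∫⁻ r, ν (Ioi (u - B₀ - r)) ∂μ.map R
      ≤ ∫⁻ r, (δ * μ.map (fun ω => W₁ ω + W₂ ω) (Ioi (u - r)) + ν (Ioi (u - r)) * (ν (Ioi B))⁻¹)
          ∂μ.map R := lintegral_mono fun r => by
        have hsplit := hcore (u - r - (B₀ + a))
        rw [show u - r - (B₀ + a) + a = u - B₀ - r by ring, sub_add_cancel, div_eq_mul_inv,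
          mul_assoc, mul_comm (ν _)] at hsplit
        refine hsplit.trans (add_le_add_left ?_ _)
        gcongr
        simpa using hV (u - r - (B₀ + a)) (B₀ + a)
    _ = _ := by
      rw [lintegral_add_left ((measurable_measure_Ioi_sub _ u).const_mul δ),
        lintegral_const_mul _ (measurable_measure_Ioi_sub _ u),
        lintegral_mul_const _ (measurable_measure_Ioi_sub _ u), div_eq_mul_inv]

theorem measure_lt_add_add_le {R W₁ W₂ : Ω → ℝ} (hR : Measurable R) (hW₁ : Measurable W₁)
    (hW₂ : Measurable W₂) (hRW₁ : IndepFun R W₁ μ)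
    (hRW₁W₂ : IndepFun (fun ω => R ω + W₁ ω) W₂ μ)
    (hRW : IndepFun R (fun ω => W₁ ω + W₂ ω) μ) (hW₁W₂ : IndepFun W₁ W₂ μ)
    (h₁ : μ.map W₁ = ν) (h₂ : μ.map W₂ = ν)
    (hB₀ : ∀ v, B₀ ≤ v → ν (Ioi (v + a)) ≤ δ * ν (Ioi v))
    (hcore : ∀ s, ν (Ioi (s + a)) ≤
      δ * ν (Ioi (B₀ + a)) * ν (Ioi s) + ν (Ioi (s + (B₀ + a))) / ν (Ioi B)) (u : ℝ) :
    μ {ω | u + a < R ω + W₁ ω + W₂ ω} ≤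
      2 * δ * μ {ω | u < R ω + W₁ ω + W₂ ω} + μ {ω | u < R ω + W₁ ω} / ν (Ioi B) := by
  have hsplit : {ω | u + a < R ω + W₁ ω + W₂ ω} ⊆
      {ω | R ω + W₁ ω ≤ u - B₀ ∧ u + a < R ω + W₁ ω + W₂ ω} ∪ {ω | u - B₀ < R ω + W₁ ω} :=
    fun ω hω => (le_or_gt _ _).imp (fun h => ⟨h, hω⟩) id
  calc _ ≤ _ := (measure_mono hsplit).trans (measure_union_le _ _)
    _ ≤ δ * μ {ω | u < R ω + W₁ ω + W₂ ω} +
          (δ * μ {ω | u < R ω + W₁ ω + W₂ ω} + μ {ω | u < R ω + W₁ ω} / ν (Ioi B)) :=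
      add_le_add (measure_le_and_lt_add_le (hR.add hW₁) hW₂ hRW₁W₂ h₂ hB₀ u)
        (measure_sub_lt_add_le hR hW₁ hW₂ hRW₁ hRW hW₁W₂ h₁ h₂ hcore u)
    _ = _ := by ring

theorem measure_lt_sum_range_add_three_le {X : ℕ → Ω → ℝ} (hX : ∀ k, Measurable (X k))
    (hXindep : iIndepFun X μ) (hXν : ∀ k, μ.map (X k) = ν)
    (hB₀ : ∀ v, B₀ ≤ v → ν (Ioi (v + a)) ≤ δ * ν (Ioi v))
    (hcore : ∀ s, ν (Ioi (s + a)) ≤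
      δ * ν (Ioi (B₀ + a)) * ν (Ioi s) + ν (Ioi (s + (B₀ + a))) / ν (Ioi B)) (n : ℕ) (u : ℝ) :
    μ {ω | u + a < ∑ i ∈ Finset.range (n + 3), X i ω} ≤
      2 * δ * μ {ω | u < ∑ i ∈ Finset.range (n + 3), X i ω} +
        μ {ω | u < ∑ i ∈ Finset.range (n + 2), X i ω} / ν (Ioi B) := by
  have hsum := hXindep.indepFun_finsetSum_finsetSum hX
  set R := fun ω => ∑ i ∈ Finset.range (n + 1), X i ω
  have hR1 : IndepFun R (X (n + 1)) μ := by
    simpa using hsum (Finset.range (n + 1)) {n + 1} (by simp)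
  have hR12 : IndepFun (fun ω => R ω + X (n + 1) ω) (X (n + 2)) μ := by
    simpa [R, Finset.sum_range_succ] using hsum (Finset.range (n + 2)) {n + 2} (by simp)
  have hR2 : IndepFun R (fun ω => X (n + 1) ω + X (n + 2) ω) μ := by
    simpa using hsum (Finset.range (n + 1)) {n + 1, n + 2} (by simp)
  simpa only [R, Finset.sum_range_succ _ (n + 2), Finset.sum_range_succ _ (n + 1)] using
    measure_lt_add_add_le (Finset.measurable_sum _ fun i _ => hX i) (hX _) (hX _) hR1 hR12 hR2
      (hXindep.indepFun (by omega)) (hXν _) (hXν _) hB₀ hcore u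

end TailEstimates

open Finset

theorem lemma_pl
    {Ω : Type*} [MeasurableSpace Ω] (μ : Measure Ω) [IsProbabilityMeasure μ]
    (X : ℕ → Ω → ℝ)
    (hXmeas : ∀ k, Measurable (X k))
    (hXindep : iIndepFun X μ)
    (hXid : ∀ k, Measure.map (X k) μ = Measure.map (X 0) μ)
    (hpos : ∀ u : ℝ, 0 < u → 0 < (μ {ω | X 0 ω > u}).toReal)
    (a : ℝ) (ha : 0 < a)
    (htail : Tendsto (fun u : ℝ =>
        (μ {ω | X 0 ω > u + a}).toReal / (μ {ω | X 0 ω > u}).toReal) atTop (nhds 0)) :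
    ∀ ε : ℝ, 0 < ε → ∃ B : ℝ, 0 < B ∧ ∀ k : ℕ, 3 ≤ k → ∀ u : ℝ, 0 < u →
      (μ {ω | ∑ i ∈ range k, X i ω > u + a}).toReal
        ≤ ε * (μ {ω | ∑ i ∈ range k, X i ω > u}).toReal
          + (μ {ω | ∑ i ∈ range (k - 1), X i ω > u}).toReal
              / (μ {ω | X 0 ω > B}).toReal := by
  intro ε hε
  set ν := μ.map (X 0)
  have : IsProbabilityMeasure ν := Measure.isProbabilityMeasure_map (hXmeas 0).aemeasurable
  have hlaw : ∀ v, μ {ω | X 0 ω > v} = ν (Ioi v) := fun v =>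
    (Measure.map_apply (hXmeas 0) measurableSet_Ioi).symm
  simp only [hlaw] at hpos htail ⊢
  have hshift : ∀ δ : ℝ, 0 < δ → ∃ M, 0 ≤ M ∧
      ∀ v, M ≤ v → ν (Ioi (v + a)) ≤ ENNReal.ofReal δ * ν (Ioi v) := fun δ hδ => by
    have hev := eventually_le_ofReal_mul_of_tendsto_div (fun _ => measure_ne_top _ _)
      ((eventually_gt_atTop 0).mono hpos) htail hδ
    obtain ⟨M, hM⟩ := (hev.and (eventually_ge_atTop 0)).exists_forall_of_atTop
    exact ⟨M, (hM M le_rfl).2, fun v hv => (hM v hv).1⟩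
  obtain ⟨B₀, hB₀0, hB₀⟩ := hshift (ε / 2) (by positivity)
  have hτc := hpos (B₀ + a) (by linarith)
  obtain ⟨T, hT0, hT⟩ := hshift (ε / 2 * (ν (Ioi (B₀ + a))).toReal) (by positivity)
  rw [ENNReal.ofReal_mul (by positivity), ENNReal.ofReal_toReal (measure_ne_top _ _)] at hT
  have hB : 0 < T + (B₀ + a) := by linarith
  have hνB : ν (Ioi (T + (B₀ + a))) ≠ 0 := (ENNReal.toReal_pos_iff.1 (hpos _ hB)).1.ne'
  have hanti : Antitone fun v => ν (Ioi v) := fun _ _ h => measure_mono (Ioi_subset_Ioi h)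
  have hcore := hanti.apply_add_le_mul_add_div (fun _ => prob_le_one) hT le_rfl hνB
  refine ⟨T + (B₀ + a), hB, fun k hk u _ => ?_⟩
  obtain ⟨n, rfl⟩ : ∃ n, k = n + 3 := ⟨k - 3, by omega⟩
  have hhalf : 2 * ENNReal.ofReal (ε / 2) = ENNReal.ofReal ε := by
    rw [← ENNReal.ofReal_ofNat 2, ← ENNReal.ofReal_mul zero_le_two]
    ring_nf
  refine ENNReal.toReal_le_mul_add_div hε.le (measure_ne_top _ _) hνB (measure_ne_top _ _) ?_
  have key := measure_lt_sum_range_add_three_le hXmeas hXindep hXid hB₀ hcore n u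
  rwa [hhalf] at key
end

section
/- Let {X_k} be i.i.d. with P(X₁>u)>0 for all u>0 and lim_{u→∞} P(X₁>u+a)/P(X₁>u)=0 for some a>0. Let Z = Σ_{k=1}^N X_k with N ~ Poisson(λ) independent of the X_k, and define G(u) = Σ_{k=2}^∞ λ^k P(S_{k−1}>u)/k!. Then for every b>0, lim_{u→∞} G(u)/P(Z>u+b) = 0. -/
/-!
Write `p n u = P(X₀ + ⋯ + X_{n-1} > u)` and `c n = λⁿ / n!`, so that
`P(Z > u) = e^{-λ} ∑ c n * p n u` and `G u = ∑ c (k + 2) * p (k + 1) u`. Independence gives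
`p (n + 1) v ≥ P(X₀ > t) * p n (v - t)`, which compares each term of `G u` with a term of the
series for `P(Z > u + b)`; the point is to make the comparison constant small.

For each fixed `n`, `p (n + 1)` inherits the rapid decay `p (n + 1) (u + a) = o(p (n + 1) u)` of
the tail of `X₀`; this disposes of finitely many terms. For the others, choose `u₀` with
`P(X₀ > w + a) ≤ ε * P(X₀ > w)` for `w ≥ u₀`. Splitting according to whether
`X₀ + ⋯ + X_{k-1} > u - a - u₀` gives `p (k + 1) u ≤ p k (u - a - u₀) + ε * p (k + 1) (u - a)`
uniformly in `k`. The first part is compared with `c (k + 1) * p (k + 1) (u + b)`, gaining the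
factor `c (k + 2) / c (k + 1) = λ / (k + 2)`, and the second with `c (k + 2) * p (k + 2) (u + b)`,
gaining the factor `ε`.
-/

open MeasureTheory ProbabilityTheory Filter Finset Asymptotics
open scoped ENNReal Nat

theorem Asymptotics.isLittleO_iff_of_nonneg {α : Type*} {l : Filter α} {f g : α → ℝ}
    (hf : ∀ x, 0 ≤ f x) (hg : ∀ x, 0 ≤ g x) :
    f =o[l] g ↔ ∀ c : ℝ, 0 < c → ∀ᶠ x in l, f x ≤ c * g x := by
  simp only [isLittleO_iff, Real.norm_of_nonneg (hf _), Real.norm_of_nonneg (hg _)]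

theorem MeasureTheory.Measure.prod_le_mul_prod_of_tail_le {ν ρ : Measure ℝ} [SFinite ρ]
    {a u₀ : ℝ} {ε : ℝ≥0∞} (hε : ε ≠ ∞)
    (hρ : ∀ w, u₀ ≤ w → ρ (Set.Ioi (w + a)) ≤ ε * ρ (Set.Ioi w)) (v : ℝ) :
    ν.prod ρ {p | p.1 ≤ v - u₀ ∧ v + a < p.1 + p.2} ≤ ε * ν.prod ρ {p | v < p.1 + p.2} := by
  have hadd : Measurable fun p : ℝ × ℝ => p.1 + p.2 := measurable_fst.add measurable_snd
  have hT : MeasurableSet {p : ℝ × ℝ | p.1 ≤ v - u₀ ∧ v + a < p.1 + p.2} :=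
    (measurableSet_le measurable_fst measurable_const).inter
      (measurableSet_lt measurable_const hadd)
  rw [Measure.prod_apply hT, Measure.prod_apply (measurableSet_lt measurable_const hadd),
    ← lintegral_const_mul' _ _ hε]
  refine lintegral_mono fun s => ?_
  by_cases hs : s ≤ v - u₀
  · have hsec : Prod.mk s ⁻¹' {p : ℝ × ℝ | p.1 ≤ v - u₀ ∧ v + a < p.1 + p.2}
        = Set.Ioi (v - s + a) := by
      ext y
      simp only [Set.mem_preimage, Set.mem_ofPred_eq, Set.mem_Ioi]
      constructor <;> intro h <;> [linarith [h.2]; exact ⟨hs, by linarith⟩]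
    have hsec₀ : Prod.mk s ⁻¹' {p : ℝ × ℝ | v < p.1 + p.2} = Set.Ioi (v - s) := by
      ext y
      simp only [Set.mem_preimage, Set.mem_ofPred_eq, Set.mem_Ioi]
      constructor <;> intro h <;> linarith
    rw [hsec, hsec₀]
    exact hρ _ (by linarith)
  · have hsec : Prod.mk s ⁻¹' {p : ℝ × ℝ | p.1 ≤ v - u₀ ∧ v + a < p.1 + p.2} = ∅ :=
      Set.eq_empty_of_forall_notMem fun y hy => hs hy.1
    simp [hsec]

section IndepSum

variable {Ω : Type*} [MeasurableSpace Ω] {μ : Measure Ω} [IsFiniteMeasure μ] {S Y : Ω → ℝ}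

theorem ProbabilityTheory.IndepFun.mul_measureReal_lt_le_measureReal_lt_add
    (hSY : IndepFun S Y μ) (v t : ℝ) :
    μ.real {ω | v - t < S ω} * μ.real {ω | t < Y ω} ≤ μ.real {ω | v < S ω + Y ω} := by
  have hprod : μ.real (S ⁻¹' Set.Ioi (v - t) ∩ Y ⁻¹' Set.Ioi t)
      = μ.real {ω | v - t < S ω} * μ.real {ω | t < Y ω} := by
    simp only [measureReal_def, hSY.measure_inter_preimage_eq_mul _ _ measurableSet_Ioi
      measurableSet_Ioi, ENNReal.toReal_mul]
    rfl
  rw [← hprod]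
  refine measureReal_mono fun ω ⟨hS, hY⟩ => ?_
  simp only [Set.mem_preimage, Set.mem_Ioi] at hS hY
  simp only [Set.mem_ofPred_eq]
  linarith

theorem ProbabilityTheory.IndepFun.measureReal_lt_add_le_of_tail_le (hSY : IndepFun S Y μ)
    (hS : Measurable S) (hY : Measurable Y) {a ε u₀ : ℝ} (hε : 0 ≤ ε)
    (htail : ∀ w, u₀ ≤ w → μ.real {ω | w + a < Y ω} ≤ ε * μ.real {ω | w < Y ω}) (v : ℝ) :
    μ.real {ω | v + a < S ω + Y ω}
      ≤ μ.real {ω | v - u₀ < S ω} + ε * μ.real {ω | v < S ω + Y ω} := by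
  set T : Set (ℝ × ℝ) := {p | p.1 ≤ v - u₀ ∧ v + a < p.1 + p.2}
  have hSYm : Measurable fun ω => (S ω, Y ω) := hS.prodMk hY
  have hYtail : ∀ w, u₀ ≤ w →
      μ.map Y (Set.Ioi (w + a)) ≤ ENNReal.ofReal ε * μ.map Y (Set.Ioi w) := by
    intro w hw
    rw [Measure.map_apply hY measurableSet_Ioi, Measure.map_apply hY measurableSet_Ioi,
      ← ENNReal.ofReal_toReal (measure_ne_top μ (Y ⁻¹' _)),
      ← ENNReal.ofReal_toReal (measure_ne_top μ (Y ⁻¹' Set.Ioi w)), ← ENNReal.ofReal_mul hε]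
    exact ENNReal.ofReal_le_ofReal (htail w hw)
  have hsmall : μ ((fun ω => (S ω, Y ω)) ⁻¹' T)
      ≤ ENNReal.ofReal ε * μ {ω | v < S ω + Y ω} := by
    have h := (μ.map S).prod_le_mul_prod_of_tail_le ENNReal.ofReal_ne_top hYtail v
    rwa [← (indepFun_iff_map_prod_eq_prod_map_map hS.aemeasurable hY.aemeasurable).mp hSY,
      Measure.map_apply hSYm (by measurability), Measure.map_apply hSYm (by measurability)] at h
  have hcover : {ω | v + a < S ω + Y ω} ⊆ {ω | v - u₀ < S ω} ∪ (fun ω => (S ω, Y ω)) ⁻¹' T :=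
    fun ω hω => (lt_or_ge (v - u₀) (S ω)).imp id fun h => ⟨h, hω⟩
  have hENN : μ {ω | v + a < S ω + Y ω}
      ≤ μ {ω | v - u₀ < S ω} + ENNReal.ofReal ε * μ {ω | v < S ω + Y ω} :=
    (measure_mono hcover).trans ((measure_union_le _ _).trans (add_le_add le_rfl hsmall))
  have h := ENNReal.toReal_mono (by finiteness) hENN
  rwa [ENNReal.toReal_add (by finiteness) (by finiteness), ENNReal.toReal_mul,
    ENNReal.toReal_ofReal hε] at h

end IndepSum

section PartialSums

variable {Ω : Type*} [MeasurableSpace Ω] {μ : Measure Ω} {X : ℕ → Ω → ℝ}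

noncomputable def partialSumTail (μ : Measure Ω) (X : ℕ → Ω → ℝ) (n : ℕ) (u : ℝ) : ℝ :=
  μ.real {ω | u < ∑ i ∈ range n, X i ω}

theorem partialSumTail_nonneg (n : ℕ) (u : ℝ) : 0 ≤ partialSumTail μ X n u :=
  measureReal_nonneg

theorem partialSumTail_one (u : ℝ) : partialSumTail μ X 1 u = μ.real {ω | u < X 0 ω} := by
  simp [partialSumTail]

theorem measureReal_lt_eq_partialSumTail_one (hXmeas : ∀ k, Measurable (X k))
    (hXid : ∀ k, μ.map (X k) = μ.map (X 0)) (k : ℕ) (t : ℝ) :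
    μ.real {ω | t < X k ω} = partialSumTail μ X 1 t := by
  rw [partialSumTail_one]
  change μ.real (X k ⁻¹' Set.Ioi t) = μ.real (X 0 ⁻¹' Set.Ioi t)
  rw [measureReal_def, measureReal_def, ← Measure.map_apply (hXmeas k) measurableSet_Ioi, hXid k,
    Measure.map_apply (hXmeas 0) measurableSet_Ioi]

variable [IsProbabilityMeasure μ]

theorem partialSumTail_le_one (n : ℕ) (u : ℝ) : partialSumTail μ X n u ≤ 1 :=
  measureReal_le_one

theorem partialSumTail_antitone (n : ℕ) : Antitone (partialSumTail μ X n) :=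
  fun _ _ huv => measureReal_mono fun _ hω => lt_of_le_of_lt huv hω

theorem mul_partialSumTail_le_partialSumTail_succ (hXmeas : ∀ k, Measurable (X k))
    (hXindep : iIndepFun X μ) (hXid : ∀ k, μ.map (X k) = μ.map (X 0)) (m : ℕ) (t v : ℝ) :
    partialSumTail μ X 1 t * partialSumTail μ X m (v - t) ≤ partialSumTail μ X (m + 1) v := by
  have h := (hXindep.indepFun_sum_range_succ hXmeas m).mul_measureReal_lt_le_measureReal_lt_add v t
  rw [measureReal_lt_eq_partialSumTail_one hXmeas hXid, mul_comm] at h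
  simpa [partialSumTail, sum_range_succ] using h

theorem partialSumTail_succ_add_le (hXmeas : ∀ k, Measurable (X k))
    (hXindep : iIndepFun X μ) (hXid : ∀ k, μ.map (X k) = μ.map (X 0)) {a ε u₀ : ℝ} (hε : 0 ≤ ε)
    (htail : ∀ w, u₀ ≤ w → partialSumTail μ X 1 (w + a) ≤ ε * partialSumTail μ X 1 w)
    (m : ℕ) (v : ℝ) :
    partialSumTail μ X (m + 1) (v + a)
      ≤ partialSumTail μ X m (v - u₀) + ε * partialSumTail μ X (m + 1) v := by
  have h := (hXindep.indepFun_sum_range_succ hXmeas m).measureReal_lt_add_le_of_tail_le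
    (by fun_prop) (hXmeas m) hε
    (by simpa only [measureReal_lt_eq_partialSumTail_one hXmeas hXid] using htail) v
  simpa [partialSumTail, sum_range_succ] using h

theorem partialSumTail_le_add_of_tail_le (hXmeas : ∀ k, Measurable (X k))
    (hXindep : iIndepFun X μ) (hXid : ∀ k, μ.map (X k) = μ.map (X 0))
    (hpos : ∀ t, 0 < partialSumTail μ X 1 t) {a ε u₀ : ℝ} (hε : 0 ≤ ε)
    (htail : ∀ w, u₀ ≤ w → partialSumTail μ X 1 (w + a) ≤ ε * partialSumTail μ X 1 w)
    (b : ℝ) (k : ℕ) (u : ℝ) :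
    partialSumTail μ X (k + 1) u
      ≤ partialSumTail μ X (k + 1) (u + b) / partialSumTail μ X 1 (a + u₀ + b)
        + ε / partialSumTail μ X 1 (a + b) * partialSumTail μ X (k + 2) (u + b) := by
  have hsplit := partialSumTail_succ_add_le hXmeas hXindep hXid hε htail k (u - a)
  have hfirst :=
    mul_partialSumTail_le_partialSumTail_succ hXmeas hXindep hXid k (a + u₀ + b) (u + b)
  have hsecond :=
    mul_partialSumTail_le_partialSumTail_succ hXmeas hXindep hXid (k + 1) (a + b) (u + b)
  rw [sub_add_cancel] at hsplit
  rw [show u + b - (a + u₀ + b) = u - a - u₀ by ring] at hfirst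
  rw [show u + b - (a + b) = u - a by ring] at hsecond
  rw [← le_div_iff₀' (hpos _)] at hfirst hsecond
  calc partialSumTail μ X (k + 1) u
      ≤ partialSumTail μ X k (u - a - u₀) + ε * partialSumTail μ X (k + 1) (u - a) := hsplit
    _ ≤ partialSumTail μ X (k + 1) (u + b) / partialSumTail μ X 1 (a + u₀ + b)
        + ε * (partialSumTail μ X (k + 2) (u + b) / partialSumTail μ X 1 (a + b)) := by
      gcongr
    _ = _ := by ring

theorem isLittleO_partialSumTail_add (hXmeas : ∀ k, Measurable (X k)) (hXindep : iIndepFun X μ)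
    (hXid : ∀ k, μ.map (X k) = μ.map (X 0)) (hpos : ∀ t, 0 < partialSumTail μ X 1 t) {a : ℝ}
    (hrapid : (fun u => partialSumTail μ X 1 (u + a)) =o[atTop] partialSumTail μ X 1) (m : ℕ) :
    (fun u => partialSumTail μ X (m + 1) (u + a)) =o[atTop] partialSumTail μ X (m + 1) := by
  induction m with
  | zero => exact hrapid
  | succ m ih =>
    rw [isLittleO_iff_of_nonneg (fun _ => partialSumTail_nonneg _ _)
      (fun _ => partialSumTail_nonneg _ _)] at hrapid ih ⊢
    intro δ hδ
    obtain ⟨u₀, hu₀⟩ := eventually_atTop.mp (hrapid (δ / 2) (half_pos hδ))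
    have hshift : Tendsto (fun u => u - (u₀ + a)) atTop atTop :=
      tendsto_atTop_add_const_right _ _ tendsto_id
    filter_upwards [hshift.eventually (ih _ (mul_pos (half_pos hδ) (hpos (u₀ + a))))] with u hu
    have hsplit := partialSumTail_succ_add_le hXmeas hXindep hXid (half_pos hδ).le hu₀ (m + 1) u
    have hK1 := mul_partialSumTail_le_partialSumTail_succ hXmeas hXindep hXid (m + 1) (u₀ + a) u
    rw [show u - (u₀ + a) + a = u - u₀ by ring] at hu
    calc partialSumTail μ X (m + 2) (u + a)
        ≤ δ / 2 * (partialSumTail μ X 1 (u₀ + a) * partialSumTail μ X (m + 1) (u - (u₀ + a)))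
          + δ / 2 * partialSumTail μ X (m + 2) u := by
          rw [← mul_assoc]; linarith
      _ ≤ δ / 2 * partialSumTail μ X (m + 2) u + δ / 2 * partialSumTail μ X (m + 2) u := by
          gcongr
      _ = δ * partialSumTail μ X (m + 2) u := by ring

end PartialSums

theorem summable_pow_div_factorial_mul {l : ℝ} (hl : 0 ≤ l) (s : ℕ) {g : ℕ → ℝ}
    (hg₀ : ∀ j, 0 ≤ g j) (hg₁ : ∀ j, g j ≤ 1) :
    Summable fun j => l ^ (j + s) / (j + s)! * g j :=
  Summable.of_nonneg_of_le (fun j => mul_nonneg (by positivity) (hg₀ j))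
    (fun j => mul_le_of_le_one_right (by positivity) (hg₁ j))
    ((summable_nat_add_iff s).mpr (Real.summable_pow_div_factorial l))

theorem pow_succ_div_factorial_succ (l : ℝ) (n : ℕ) :
    l ^ (n + 1) / (n + 1)! = l / (n + 1) * (l ^ n / n !) := by
  rw [Nat.factorial_succ, Nat.cast_mul, pow_succ]
  push_cast
  field_simp

section TailSeries

variable {Ω : Type*} [MeasurableSpace Ω] {μ : Measure Ω} {X : ℕ → Ω → ℝ} {l : ℝ}

/-- `e^l` times the tail of the compound Poisson sum, see `measureReal_lt_randomSum_eq`. -/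
noncomputable def tailSeries (μ : Measure Ω) (X : ℕ → Ω → ℝ) (l u : ℝ) : ℝ :=
  ∑' n, l ^ n / n ! * partialSumTail μ X n u

theorem tailSeries_nonneg (hl : 0 ≤ l) (u : ℝ) : 0 ≤ tailSeries μ X l u :=
  tsum_nonneg fun _ => mul_nonneg (by positivity) (partialSumTail_nonneg _ _)

variable [IsProbabilityMeasure μ]

theorem summable_pow_div_factorial_mul_partialSumTail (hl : 0 ≤ l) (u : ℝ) :
    Summable fun n => l ^ n / n ! * partialSumTail μ X n u := by
  simpa using summable_pow_div_factorial_mul hl 0 (g := fun n => partialSumTail μ X n u)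
    (fun _ => partialSumTail_nonneg _ _) (fun _ => partialSumTail_le_one _ _)

theorem pow_div_factorial_mul_partialSumTail_le_tailSeries (hl : 0 ≤ l) (n : ℕ) (u : ℝ) :
    l ^ n / n ! * partialSumTail μ X n u ≤ tailSeries μ X l u :=
  (summable_pow_div_factorial_mul_partialSumTail hl u).le_tsum n
    fun _ _ => mul_nonneg (by positivity) (partialSumTail_nonneg _ _)

theorem tsum_pow_div_factorial_mul_partialSumTail_add_le_tailSeries (hl : 0 ≤ l) (s : ℕ)
    (u : ℝ) :
    ∑' j, l ^ (j + s) / (j + s)! * partialSumTail μ X (j + s) u ≤ tailSeries μ X l u :=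
  tsum_comp_le_tsum_of_inj (summable_pow_div_factorial_mul_partialSumTail hl u)
    (fun _ => mul_nonneg (by positivity) (partialSumTail_nonneg _ _)) (add_left_injective s)

theorem pow_div_factorial_mul_partialSumTail_le (hXmeas : ∀ k, Measurable (X k))
    (hXindep : iIndepFun X μ) (hXid : ∀ k, μ.map (X k) = μ.map (X 0))
    (hpos : ∀ t, 0 < partialSumTail μ X 1 t) (hl : 0 ≤ l) {a b u₀ δ : ℝ} (hδ : 0 ≤ δ)
    (htail : ∀ w, u₀ ≤ w →
      partialSumTail μ X 1 (w + a) ≤ δ * partialSumTail μ X 1 (a + b) * partialSumTail μ X 1 w)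
    {k : ℕ} (hk : l / (k + 2) ≤ δ * partialSumTail μ X 1 (a + u₀ + b)) (u : ℝ) :
    l ^ (k + 2) / (k + 2)! * partialSumTail μ X (k + 1) u
      ≤ δ * (l ^ (k + 1) / (k + 1)! * partialSumTail μ X (k + 1) (u + b))
        + δ * (l ^ (k + 2) / (k + 2)! * partialSumTail μ X (k + 2) (u + b)) := by
  have hsplit := partialSumTail_le_add_of_tail_le hXmeas hXindep hXid hpos
    (mul_nonneg hδ (hpos _).le) htail b k u
  rw [mul_div_cancel_right₀ _ (hpos _).ne'] at hsplit
  have hweight : l / ((k + 1 : ℕ) + 1) / partialSumTail μ X 1 (a + u₀ + b) ≤ δ := by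
    rw [div_le_iff₀ (hpos _)]
    exact_mod_cast hk
  calc l ^ (k + 2) / (k + 2)! * partialSumTail μ X (k + 1) u
      ≤ l ^ (k + 2) / (k + 2)! * (partialSumTail μ X (k + 1) (u + b)
          / partialSumTail μ X 1 (a + u₀ + b) + δ * partialSumTail μ X (k + 2) (u + b)) := by
        gcongr
    _ = l / ((k + 1 : ℕ) + 1) / partialSumTail μ X 1 (a + u₀ + b)
          * (l ^ (k + 1) / (k + 1)! * partialSumTail μ X (k + 1) (u + b))
        + δ * (l ^ (k + 2) / (k + 2)! * partialSumTail μ X (k + 2) (u + b)) := by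
      rw [pow_succ_div_factorial_succ l (k + 1)]
      ring
    _ ≤ _ := by
      gcongr
      exact mul_nonneg (by positivity) (partialSumTail_nonneg _ _)

theorem exists_tsum_pow_div_factorial_mul_partialSumTail_le (hXmeas : ∀ k, Measurable (X k))
    (hXindep : iIndepFun X μ) (hXid : ∀ k, μ.map (X k) = μ.map (X 0))
    (hpos : ∀ t, 0 < partialSumTail μ X 1 t) (hl : 0 ≤ l) {a : ℝ}
    (hrapid : (fun u => partialSumTail μ X 1 (u + a)) =o[atTop] partialSumTail μ X 1)
    (b : ℝ) {δ : ℝ} (hδ : 0 < δ) :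
    ∃ M : ℕ, ∀ u, ∑' j, l ^ (j + M + 2) / (j + M + 2)! * partialSumTail μ X (j + M + 1) u
      ≤ δ * tailSeries μ X l (u + b) := by
  rw [isLittleO_iff_of_nonneg (fun _ => partialSumTail_nonneg _ _)
    (fun _ => partialSumTail_nonneg _ _)] at hrapid
  obtain ⟨u₀, hu₀⟩ := eventually_atTop.mp
    (hrapid (δ / 2 * partialSumTail μ X 1 (a + b)) (mul_pos (half_pos hδ) (hpos _)))
  have hγ := hpos (a + u₀ + b)
  obtain ⟨M, hM⟩ := exists_nat_ge (2 * l / (δ * partialSumTail μ X 1 (a + u₀ + b)))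
  rw [div_le_iff₀ (by positivity)] at hM
  have hweight : ∀ j : ℕ, l / ((j + M : ℕ) + 2) ≤ δ / 2 * partialSumTail μ X 1 (a + u₀ + b) := by
    intro j
    rw [div_le_iff₀ (by positivity)]
    push_cast
    nlinarith [mul_pos hδ hγ, (Nat.cast_nonneg j : (0 : ℝ) ≤ j)]
  refine ⟨M, fun u => ?_⟩
  have hsummable : ∀ s (n : ℕ → ℕ) (v : ℝ),
      Summable fun j => l ^ (j + M + s) / (j + M + s)! * partialSumTail μ X (n j) v := by
    intro s n v
    simpa only [← add_assoc] using summable_pow_div_factorial_mul hl (M + s)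
      (fun _ => partialSumTail_nonneg _ _) (fun _ => partialSumTail_le_one _ _)
  have hshift : ∀ s, ∑' j, l ^ (j + M + s) / (j + M + s)! * partialSumTail μ X (j + M + s) (u + b)
      ≤ tailSeries μ X l (u + b) := fun s => by
    simpa only [← add_assoc] using
      tsum_pow_div_factorial_mul_partialSumTail_add_le_tailSeries hl (M + s) (u + b)
  calc ∑' j, l ^ (j + M + 2) / (j + M + 2)! * partialSumTail μ X (j + M + 1) u
      ≤ ∑' j, (δ / 2 * (l ^ (j + M + 1) / (j + M + 1)! * partialSumTail μ X (j + M + 1) (u + b))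
          + δ / 2 * (l ^ (j + M + 2) / (j + M + 2)! * partialSumTail μ X (j + M + 2) (u + b))) :=
        Summable.tsum_le_tsum (fun j => pow_div_factorial_mul_partialSumTail_le hXmeas hXindep
            hXid hpos hl (half_pos hδ).le hu₀ (hweight j) u) (hsummable 2 _ _)
          (((hsummable 1 _ _).mul_left _).add ((hsummable 2 _ _).mul_left _))
    _ = δ / 2 * ∑' j, l ^ (j + M + 1) / (j + M + 1)! * partialSumTail μ X (j + M + 1) (u + b)
          + δ / 2
            * ∑' j, l ^ (j + M + 2) / (j + M + 2)! * partialSumTail μ X (j + M + 2) (u + b) := by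
        rw [Summable.tsum_add ((hsummable 1 _ _).mul_left _) ((hsummable 2 _ _).mul_left _),
          tsum_mul_left, tsum_mul_left]
    _ ≤ δ / 2 * tailSeries μ X l (u + b) + δ / 2 * tailSeries μ X l (u + b) := by
        have hδ2 : 0 ≤ δ / 2 := by positivity
        exact add_le_add (mul_le_mul_of_nonneg_left (hshift 1) hδ2)
          (mul_le_mul_of_nonneg_left (hshift 2) hδ2)
    _ = δ * tailSeries μ X l (u + b) := by ring

theorem isLittleO_pow_div_factorial_mul_partialSumTail (hXmeas : ∀ k, Measurable (X k))
    (hXindep : iIndepFun X μ) (hXid : ∀ k, μ.map (X k) = μ.map (X 0))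
    (hpos : ∀ t, 0 < partialSumTail μ X 1 t) (hl : 0 < l) {a : ℝ}
    (hrapid : (fun u => partialSumTail μ X 1 (u + a)) =o[atTop] partialSumTail μ X 1)
    (b : ℝ) (k : ℕ) :
    (fun u => l ^ (k + 2) / (k + 2)! * partialSumTail μ X (k + 1) u)
      =o[atTop] fun u => tailSeries μ X l (u + b) := by
  have hshift : Tendsto (fun u => u - a) atTop atTop :=
    tendsto_atTop_add_const_right _ _ tendsto_id
  have hsmall : partialSumTail μ X (k + 1)
      =o[atTop] fun u => partialSumTail μ X (k + 1) (u - a) := by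
    simpa only [Function.comp_def, sub_add_cancel] using
      (isLittleO_partialSumTail_add hXmeas hXindep hXid hpos hrapid k).comp_tendsto hshift
  have hcomparable : (fun u => partialSumTail μ X (k + 1) (u - a))
      =O[atTop] fun u => tailSeries μ X l (u + b) := by
    have hβ := hpos (a + b)
    refine IsBigO.of_bound (1 / (partialSumTail μ X 1 (a + b) * (l ^ (k + 2) / (k + 2)!)))
      (Eventually.of_forall fun u => ?_)
    have hK1 :=
      mul_partialSumTail_le_partialSumTail_succ hXmeas hXindep hXid (k + 1) (a + b) (u + b)
    rw [show u + b - (a + b) = u - a by ring] at hK1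
    rw [Real.norm_of_nonneg (partialSumTail_nonneg _ _),
      Real.norm_of_nonneg (tailSeries_nonneg hl.le _), one_div_mul_eq_div,
      le_div_iff₀ (by positivity)]
    calc partialSumTail μ X (k + 1) (u - a)
          * (partialSumTail μ X 1 (a + b) * (l ^ (k + 2) / (k + 2)!))
        = l ^ (k + 2) / (k + 2)!
          * (partialSumTail μ X 1 (a + b) * partialSumTail μ X (k + 1) (u - a)) := by ring
      _ ≤ l ^ (k + 2) / (k + 2)! * partialSumTail μ X (k + 2) (u + b) := by gcongr
      _ ≤ tailSeries μ X l (u + b) :=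
          pow_div_factorial_mul_partialSumTail_le_tailSeries hl.le _ _
  exact (hsmall.trans_isBigO hcomparable).const_mul_left _

theorem isLittleO_tsum_pow_div_factorial_mul_partialSumTail (hXmeas : ∀ k, Measurable (X k))
    (hXindep : iIndepFun X μ) (hXid : ∀ k, μ.map (X k) = μ.map (X 0))
    (hpos : ∀ t, 0 < partialSumTail μ X 1 t) (hl : 0 < l) {a : ℝ}
    (hrapid : (fun u => partialSumTail μ X 1 (u + a)) =o[atTop] partialSumTail μ X 1) (b : ℝ) :
    (fun u => ∑' k, l ^ (k + 2) / (k + 2)! * partialSumTail μ X (k + 1) u)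
      =o[atTop] fun u => tailSeries μ X l (u + b) := by
  have hterm_nonneg : ∀ k u, 0 ≤ l ^ (k + 2) / (k + 2)! * partialSumTail μ X (k + 1) u :=
    fun _ _ => mul_nonneg (by positivity) (partialSumTail_nonneg _ _)
  rw [isLittleO_iff_of_nonneg (fun _ => tsum_nonneg fun k => hterm_nonneg k _)
    (fun _ => tailSeries_nonneg hl.le _)]
  intro δ hδ
  obtain ⟨M, htail⟩ := exists_tsum_pow_div_factorial_mul_partialSumTail_le hXmeas hXindep hXid
    hpos hl.le hrapid b (half_pos hδ)
  have hhead : (fun u => ∑ k ∈ range M, l ^ (k + 2) / (k + 2)! * partialSumTail μ X (k + 1) u)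
      =o[atTop] fun u => tailSeries μ X l (u + b) := by
    simpa only [Finset.sum_fn] using IsLittleO.sum fun k _ =>
      isLittleO_pow_div_factorial_mul_partialSumTail hXmeas hXindep hXid hpos hl hrapid b k
  rw [isLittleO_iff_of_nonneg (fun _ => sum_nonneg fun k _ => hterm_nonneg k _)
    (fun _ => tailSeries_nonneg hl.le _)] at hhead
  filter_upwards [hhead (δ / 2) (half_pos hδ)] with u hu
  have hsummable : Summable fun k => l ^ (k + 2) / (k + 2)! * partialSumTail μ X (k + 1) u := by
    simpa using summable_pow_div_factorial_mul hl.le 2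
      (fun _ => partialSumTail_nonneg _ _) (fun _ => partialSumTail_le_one _ _)
  rw [← hsummable.sum_add_tsum_nat_add M]
  linarith [htail u]

end TailSeries

section RandomSum

variable {Ω : Type*} [MeasurableSpace Ω] {μ : Measure Ω} [IsProbabilityMeasure μ]
  {X : ℕ → Ω → ℝ} {N : Ω → ℕ}

theorem hasSum_measureReal_mul_partialSumTail (hXmeas : ∀ k, Measurable (X k))
    (hNmeas : Measurable N) (hNindep : IndepFun N (fun ω k => X k ω) μ) (u : ℝ) :
    HasSum (fun n => μ.real {ω | N ω = n} * partialSumTail μ X n u)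
      (μ.real {ω | u < ∑ i ∈ range (N ω), X i ω}) := by
  set E : ℕ → Set Ω := fun n => {ω | N ω = n} ∩ {ω | u < ∑ i ∈ range n, X i ω}
  have hmeas : ∀ n, MeasurableSet (E n) := fun n =>
    (hNmeas (measurableSet_singleton n)).inter (measurableSet_lt measurable_const (by fun_prop))
  have hdisj : Pairwise (Function.onFun Disjoint E) := fun m n hmn =>
    Set.disjoint_left.mpr fun ω hm hn => hmn (hm.1.symm.trans hn.1)
  have hunion : {ω | u < ∑ i ∈ range (N ω), X i ω} = ⋃ n, E n := by
    ext ω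
    simp [E]
  have hE : ∀ n, μ.real (E n) = μ.real {ω | N ω = n} * partialSumTail μ X n u := by
    intro n
    have hind : IndepFun N (fun ω => ∑ i ∈ range n, X i ω) μ :=
      hNindep.comp measurable_id (Finset.measurable_sum (range n) fun i _ => measurable_pi_apply i)
    simp only [measureReal_def, partialSumTail, ← ENNReal.toReal_mul]
    exact congrArg ENNReal.toReal (hind.measure_inter_preimage_eq_mul {n} (Set.Ioi u)
      (measurableSet_singleton n) measurableSet_Ioi)
  have hne_top : ∑' n, μ (E n) ≠ ∞ := by
    rw [← measure_iUnion hdisj hmeas]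
    finiteness
  simp only [← hE]
  rw [hunion, measureReal_def, measure_iUnion hdisj hmeas, ENNReal.tsum_toReal_eq (by finiteness)]
  exact ENNReal.hasSum_toReal hne_top

theorem measureReal_lt_randomSum_eq (hXmeas : ∀ k, Measurable (X k)) (hNmeas : Measurable N)
    (hNindep : IndepFun N (fun ω k => X k ω) μ) {l : ℝ} (hl : 0 ≤ l)
    (hN : ∀ n : ℕ, μ {ω | N ω = n} = ENNReal.ofReal (Real.exp (-l) * l ^ n / n !)) (u : ℝ) :
    μ.real {ω | u < ∑ i ∈ range (N ω), X i ω} = Real.exp (-l) * tailSeries μ X l u := by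
  refine (hasSum_measureReal_mul_partialSumTail hXmeas hNmeas hNindep u).unique ?_
  have hNreal : ∀ n, μ.real {ω | N ω = n} = Real.exp (-l) * (l ^ n / n !) := fun n => by
    rw [measureReal_def, hN n, ENNReal.toReal_ofReal (by positivity), mul_div_assoc]
  simp only [hNreal, mul_assoc]
  exact (summable_pow_div_factorial_mul_partialSumTail hl u).hasSum.mul_left _

end RandomSum

theorem lemma_G_general
    {Ω : Type*} [MeasurableSpace Ω] (μ : Measure Ω) [IsProbabilityMeasure μ]
    (X : ℕ → Ω → ℝ) (N : Ω → ℕ)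
    (hXmeas : ∀ k, Measurable (X k)) (hNmeas : Measurable N)
    (hXindep : iIndepFun X μ)
    (hXid : ∀ k, Measure.map (X k) μ = Measure.map (X 0) μ)
    (hNindep : IndepFun N (fun ω => fun k => X k ω) μ)
    (l : ℝ) (hl : 0 < l)
    (hN : ∀ n : ℕ, μ {ω | N ω = n}
        = ENNReal.ofReal (Real.exp (-l) * l ^ n / (Nat.factorial n)))
    (hpos : ∀ u : ℝ, 0 < u → 0 < (μ {ω | X 0 ω > u}).toReal)
    (a : ℝ)
    (htail : Tendsto (fun u : ℝ =>
        (μ {ω | X 0 ω > u + a}).toReal / (μ {ω | X 0 ω > u}).toReal) atTop (nhds 0))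
    (G : ℝ → ℝ)
    (hG : ∀ u : ℝ, G u = ∑' k : ℕ,
        l ^ (k + 2) * (μ {ω | ∑ i ∈ range (k + 1), X i ω > u}).toReal
          / (Nat.factorial (k + 2))) :
    ∀ b : ℝ, 0 < b →
      Tendsto (fun u : ℝ =>
          G u / (μ {ω | ∑ i ∈ range (N ω), X i ω > u + b}).toReal)
        atTop (nhds 0) := by
  intro b _
  simp only [gt_iff_lt, ← measureReal_def, ← partialSumTail_one] at hpos htail
  have hpos' : ∀ t, 0 < partialSumTail μ X 1 t := fun t =>
    (hpos _ (lt_max_of_lt_right one_pos)).trans_le (partialSumTail_antitone 1 (le_max_left t 1))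
  have hrapid : (fun u => partialSumTail μ X 1 (u + a)) =o[atTop] partialSumTail μ X 1 := by
    rwa [isLittleO_iff_tendsto' (Eventually.of_forall fun u h => absurd h (hpos' u).ne')]
  have hG' : G = fun u => ∑' k, l ^ (k + 2) / (k + 2)! * partialSumTail μ X (k + 1) u :=
    funext fun u => (hG u).trans (tsum_congr fun k => mul_div_right_comm _ _ _)
  have hsmall := (isLittleO_tsum_pow_div_factorial_mul_partialSumTail hXmeas hXindep hXid hpos'
    hl hrapid b).const_mul_right (Real.exp_pos (-l)).ne'
  simp only [← measureReal_lt_randomSum_eq hXmeas hNmeas hNindep hl.le hN, ← hG'] at hsmall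
  exact hsmall.tendsto_div_nhds_zero

theorem lemma_G
    {Ω : Type*} [MeasurableSpace Ω] (μ : Measure Ω) [IsProbabilityMeasure μ]
    (X : ℕ → Ω → ℝ) (N : Ω → ℕ)
    (hXmeas : ∀ k, Measurable (X k)) (hNmeas : Measurable N)
    (hXindep : iIndepFun X μ)
    (hXid : ∀ k, Measure.map (X k) μ = Measure.map (X 0) μ)
    (hNindep : IndepFun N (fun ω => fun k => X k ω) μ)
    (l : ℝ) (hl : 0 < l)
    (hN : ∀ n : ℕ, μ {ω | N ω = n}
        = ENNReal.ofReal (Real.exp (-l) * l ^ n / (Nat.factorial n)))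
    (hpos : ∀ u : ℝ, 0 < u → 0 < (μ {ω | X 0 ω > u}).toReal)
    (a : ℝ) (ha : 0 < a)
    (htail : Tendsto (fun u : ℝ =>
        (μ {ω | X 0 ω > u + a}).toReal / (μ {ω | X 0 ω > u}).toReal) atTop (nhds 0))
    (G : ℝ → ℝ)
    (hG : ∀ u : ℝ, G u = ∑' k : ℕ,
        l ^ (k + 2) * (μ {ω | ∑ i ∈ range (k + 1), X i ω > u}).toReal
          / (Nat.factorial (k + 2))) :
    ∀ b : ℝ, 0 < b →
      Tendsto (fun u : ℝ =>
          G u / (μ {ω | ∑ i ∈ range (N ω), X i ω > u + b}).toReal)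
        atTop (nhds 0) :=
  lemma_G_general μ X N hXmeas hNmeas hXindep hXid hNindep l hl hN hpos a htail G hG
end

section
/- Let X(t) be a symmetric compound Poisson process with jumps X_k (i.i.d. symmetric) and rate λ, with partial sums S_n = X₁+⋯+X_n. Then for all u>0: P(sup_{0≤t≤1} X(t) > u) ≤ 2·P(X(1)>u) − D(u), where D(u) = e^{−λ}[λP(X₁>u) + Σ_{n=2}^∞ (λⁿ/n!)·P(max_{1≤k≤n−1} S_k ≤ u, S_n > u)]. -/
/-!
Conditionally on `N 1 = n`, which is independent of the jumps, the supremum of `X` over `[0, 1]`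
exceeds `u` iff the random walk `S k = X₀ + ⋯ + X_{k-1}` exceeds `u` at some `k ≤ n`. Split this
event according to the first passage time `k`. Since `S n - S k` is symmetric and independent of
the walk up to time `k`, the walk is still above `u` at time `n` with conditional probability at
least `1/2`, and with probability one if `k = n`. Hence
`P(max_{k ≤ n} S k > u) + P(first passage at n) ≤ 2 P(S n > u)`, and averaging over the Poisson
law of `N 1` gives the claim, the second term averaging to `D u`.
-/

open MeasureTheory ProbabilityTheory Finset Function

section Passage

variable (u : ℝ)

def firstPassage (n : ℕ) : Set (ℕ → ℝ) :=
  {g | (∀ k < n, ∑ i ∈ range k, g i ≤ u) ∧ u < ∑ i ∈ range n, g i}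

def exceedsBy (n : ℕ) : Set (ℕ → ℝ) :=
  {g | ∃ k ≤ n, u < ∑ i ∈ range k, g i}

def sumAbove (n : ℕ) : Set (ℕ → ℝ) :=
  {g | u < ∑ i ∈ range n, g i}

variable {u}

lemma firstPassage_subset_sumAbove (n : ℕ) : firstPassage u n ⊆ sumAbove u n :=
  fun _ hg => hg.2

lemma pairwise_disjoint_firstPassage : Pairwise (Disjoint on (firstPassage u)) := by
  suffices ∀ k n, k < n → Disjoint (firstPassage u k) (firstPassage u n) from
    fun k n (hkn : k ≠ n) => hkn.lt_or_gt.elim (this k n) fun h => (this n k h).symm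
  intro k n hkn
  exact Set.disjoint_left.2 fun g hk hn => (hn.1 k hkn).not_gt hk.2

lemma exceedsBy_subset_biUnion_firstPassage (n : ℕ) :
    exceedsBy u n ⊆ ⋃ k ∈ range (n + 1), firstPassage u k := by
  classical
  rintro g ⟨k, hkn, hk⟩
  have hex : ∃ k, u < ∑ i ∈ range k, g i := ⟨k, hk⟩
  refine Set.mem_biUnion (mem_range.2 (Nat.lt_succ_of_le ((Nat.find_min' hex hk).trans hkn)))
    ⟨fun j hj => not_lt.1 (Nat.find_min hex hj), Nat.find_spec hex⟩

lemma firstPassage_inter_subset {k n : ℕ} (hkn : k ≤ n) :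
    firstPassage u k ∩ {g | 0 ≤ ∑ i ∈ Ico k n, g i} ⊆ firstPassage u k ∩ sumAbove u n := by
  rintro g ⟨hk, hincr⟩
  refine ⟨hk, ?_⟩
  have := sum_range_add_sum_Ico g hkn
  simp only [sumAbove, Set.mem_ofPred_eq] at hincr ⊢
  linarith [hk.2]

lemma firstPassage_eq_of_nonneg (hu : 0 ≤ u) (n : ℕ) :
    firstPassage u n = {g | (∀ k ∈ Icc 1 (n - 1), ∑ i ∈ range k, g i ≤ u) ∧
      u < ∑ i ∈ range n, g i} := by
  ext g
  refine and_congr_left fun _ => ⟨fun h k hk => h k ?_, fun h k hk => ?_⟩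
  · have := mem_Icc.1 hk; omega
  · rcases k with _ | k
    · simpa using hu
    · exact h _ (mem_Icc.2 ⟨by omega, by omega⟩)

lemma measurableSet_sumAbove (n : ℕ) : MeasurableSet (sumAbove u n) :=
  measurableSet_lt measurable_const (Finset.measurable_sum _ fun i _ => measurable_pi_apply i)

lemma measurableSet_exceedsBy (n : ℕ) : MeasurableSet (exceedsBy u n) := by
  have : exceedsBy u n = ⋃ k ∈ Set.Iic n, sumAbove u k := by ext; simp [exceedsBy, sumAbove]
  rw [this]
  exact MeasurableSet.biUnion (Set.to_countable _) fun k _ => measurableSet_sumAbove k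

lemma mem_exceedsBy_of_lt_ciSup {n : ℝ → ℕ} (hn : Monotone n) {g : ℕ → ℝ}
    (h : u < ⨆ t : Set.Icc (0:ℝ) 1, ∑ i ∈ range (n t), g i) : g ∈ exceedsBy u (n 1) := by
  have : Nonempty (Set.Icc (0:ℝ) 1) := (Set.nonempty_Icc.2 zero_le_one).to_subtype
  obtain ⟨t, ht⟩ := exists_lt_of_lt_ciSup h
  exact ⟨n t, hn t.2.2, ht⟩

end Passage

lemma one_le_two_mul_measure_Ici_zero {ρ : Measure ℝ} [IsProbabilityMeasure ρ]
    (hρ : ρ.map Neg.neg = ρ) : 1 ≤ 2 * ρ (Set.Ici 0) := by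
  have hIic : ρ (Set.Iic 0) = ρ (Set.Ici 0) := by
    conv_lhs => rw [← hρ]
    rw [Measure.map_apply measurable_neg measurableSet_Iic]
    simp
  calc 1 = ρ (Set.Ici 0 ∪ Set.Iic 0) := by rw [Set.Ici_union_Iic, measure_univ]
    _ ≤ ρ (Set.Ici 0) + ρ (Set.Iic 0) := measure_union_le _ _
    _ = 2 * ρ (Set.Ici 0) := by rw [hIic, two_mul]

section RandomWalk

abbrev coordsMeasurableSpace (T : Set ℕ) : MeasurableSpace (ℕ → ℝ) :=
  ⨆ i ∈ T, MeasurableSpace.comap (fun g : ℕ → ℝ => g i) inferInstance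

lemma coordsMeasurableSpace_le (T : Set ℕ) : coordsMeasurableSpace T ≤ MeasurableSpace.pi :=
  iSup₂_le fun i _ => (measurable_pi_apply i).comap_le

lemma measurable_sum_of_subset {s : Finset ℕ} {T : Set ℕ} (hsT : ↑s ⊆ T) :
    Measurable[coordsMeasurableSpace T] (fun g : ℕ → ℝ => ∑ i ∈ s, g i) :=
  Finset.measurable_sum s fun i hi =>
    Measurable.of_comap_le (le_iSup₂ (f := fun i (_ : i ∈ T) =>
      MeasurableSpace.comap (fun g : ℕ → ℝ => g i) inferInstance) i (hsT hi))

lemma measurableSet_firstPassage_Iio (u : ℝ) (n : ℕ) :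
    MeasurableSet[coordsMeasurableSpace (Set.Iio n)] (firstPassage u n) := by
  have hsum : ∀ k ≤ n, Measurable[coordsMeasurableSpace (Set.Iio n)]
      (fun g : ℕ → ℝ => ∑ i ∈ range k, g i) := fun k hk =>
    measurable_sum_of_subset fun i hi => (mem_range.1 hi).trans_le hk
  have : firstPassage u n = (⋂ k ∈ Set.Iio n, {g | ∑ i ∈ range k, g i ≤ u})
      ∩ {g | u < ∑ i ∈ range n, g i} := by ext; simp [firstPassage]
  rw [this]
  exact (MeasurableSet.biInter (Set.to_countable _) fun k hk =>
    measurableSet_le (hsum k (le_of_lt hk)) measurable_const).inter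
    (measurableSet_lt measurable_const (hsum n le_rfl))

lemma measurableSet_firstPassage (u : ℝ) (n : ℕ) : MeasurableSet (firstPassage u n) :=
  coordsMeasurableSpace_le _ _ (measurableSet_firstPassage_Iio u n)

variable {P : ℕ → Measure ℝ} [∀ i, IsProbabilityMeasure (P i)]

lemma indep_coordsMeasurableSpace_Iio_Ici (k : ℕ) :
    Indep (coordsMeasurableSpace (Set.Iio k)) (coordsMeasurableSpace (Set.Ici k))
      (Measure.infinitePi P) :=
  indep_iSup_of_disjoint (fun i => (measurable_pi_apply i).comap_le)
    (iIndepFun_infinitePi (X := fun _ => id) fun _ => measurable_id).iIndep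
    (Set.Iio_disjoint_Ici le_rfl)

variable (hP : ∀ i, (P i).map Neg.neg = P i)
include hP

lemma infinitePi_map_neg : (Measure.infinitePi P).map Neg.neg = Measure.infinitePi P := by
  conv_rhs => rw [← funext hP]
  exact Measure.infinitePi_map_pi P fun _ => measurable_neg

lemma one_le_two_mul_infinitePi_sum_nonneg (s : Finset ℕ) :
    1 ≤ 2 * Measure.infinitePi P {g | 0 ≤ ∑ i ∈ s, g i} := by
  have hT : Measurable (fun g : ℕ → ℝ => ∑ i ∈ s, g i) :=
    Finset.measurable_sum s fun i _ => measurable_pi_apply i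
  have hsymm : ((Measure.infinitePi P).map fun g => ∑ i ∈ s, g i).map Neg.neg
      = (Measure.infinitePi P).map fun g => ∑ i ∈ s, g i := by
    conv_rhs => rw [← infinitePi_map_neg hP, Measure.map_map hT measurable_neg]
    rw [Measure.map_map measurable_neg hT]
    congr 1
    ext g
    simp
  have : IsProbabilityMeasure ((Measure.infinitePi P).map fun g => ∑ i ∈ s, g i) :=
    Measure.isProbabilityMeasure_map hT.aemeasurable
  have := one_le_two_mul_measure_Ici_zero hsymm
  rwa [Measure.map_apply hT measurableSet_Ici] at this

lemma measure_firstPassage_le_two_mul {u : ℝ} {k n : ℕ} (hkn : k ≤ n) :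
    Measure.infinitePi P (firstPassage u k)
      ≤ 2 * Measure.infinitePi P (firstPassage u k ∩ sumAbove u n) := by
  set ν := Measure.infinitePi P
  set incr := {g : ℕ → ℝ | 0 ≤ ∑ i ∈ Ico k n, g i}
  have hindep : ν (firstPassage u k ∩ incr) = ν (firstPassage u k) * ν incr :=
    (Indep_iff _ _ _).1 (indep_coordsMeasurableSpace_Iio_Ici k) _ _
      (measurableSet_firstPassage_Iio u k)
      (measurableSet_le measurable_const (measurable_sum_of_subset fun i hi => (mem_Ico.1 hi).1))
  calc ν (firstPassage u k) ≤ ν (firstPassage u k) * (2 * ν incr) :=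
        le_mul_of_one_le_right' (one_le_two_mul_infinitePi_sum_nonneg hP _)
    _ = 2 * ν (firstPassage u k ∩ incr) := by rw [hindep]; ring
    _ ≤ 2 * ν (firstPassage u k ∩ sumAbove u n) := by
        gcongr 2 * ?_
        exact measure_mono (firstPassage_inter_subset hkn)

theorem measure_exceedsBy_add_measure_firstPassage_le (u : ℝ) (n : ℕ) :
    Measure.infinitePi P (exceedsBy u n) + Measure.infinitePi P (firstPassage u n)
      ≤ 2 * Measure.infinitePi P (sumAbove u n) := by
  set ν := Measure.infinitePi P
  have hlast : firstPassage u n ∩ sumAbove u n = firstPassage u n :=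
    Set.inter_eq_left.2 (firstPassage_subset_sumAbove n)
  calc ν (exceedsBy u n) + ν (firstPassage u n)
      ≤ ∑ k ∈ range (n + 1), ν (firstPassage u k) + ν (firstPassage u n) := by
        gcongr
        exact (measure_mono (exceedsBy_subset_biUnion_firstPassage n)).trans
          (measure_biUnion_finset_le _ _)
    _ = ∑ k ∈ range n, ν (firstPassage u k) + 2 * ν (firstPassage u n ∩ sumAbove u n) := by
        rw [sum_range_succ, hlast]; ring
    _ ≤ ∑ k ∈ range n, 2 * ν (firstPassage u k ∩ sumAbove u n)
          + 2 * ν (firstPassage u n ∩ sumAbove u n) := by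
        gcongr with k hk
        exact measure_firstPassage_le_two_mul hP (mem_range.1 hk).le
    _ = 2 * ν (⋃ k ∈ range (n + 1), firstPassage u k ∩ sumAbove u n) := by
        rw [measure_biUnion_finset
          (fun a _ b _ hab => (pairwise_disjoint_firstPassage hab).mono
            Set.inter_subset_left Set.inter_subset_left)
          (fun k _ => (measurableSet_firstPassage u k).inter (measurableSet_sumAbove n)),
          sum_range_succ, mul_add, mul_sum]
    _ ≤ 2 * ν (sumAbove u n) := by
        gcongr
        exact Set.iUnion₂_subset fun _ _ => Set.inter_subset_right

end RandomWalk

lemma ProbabilityTheory.IndepFun.measure_setOf_mem_eq_tsum {Ω β : Type*} [MeasurableSpace Ω]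
    [MeasurableSpace β] {μ : Measure Ω} {M : Ω → ℕ} {Y : Ω → β} (hM : Measurable M)
    (hY : Measurable Y) (hMY : IndepFun M Y μ) {C : ℕ → Set β} (hC : ∀ n, MeasurableSet (C n)) :
    μ {ω | Y ω ∈ C (M ω)} = ∑' n, μ {ω | M ω = n} * μ (Y ⁻¹' C n) := by
  have : {ω | Y ω ∈ C (M ω)} = ⋃ n, M ⁻¹' {n} ∩ Y ⁻¹' C n := by ext; simp
  rw [this, measure_iUnion
    (fun a b hab => ((Set.disjoint_singleton.2 hab).preimage M).mono
      Set.inter_subset_left Set.inter_subset_left)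
    (fun n => (hM (measurableSet_singleton n)).inter (hY (hC n)))]
  exact tsum_congr fun n =>
    hMY.measure_inter_preimage_eq_mul _ _ (measurableSet_singleton n) (hC n)

section RandomTime

variable {Ω : Type*} [MeasurableSpace Ω] {μ : Measure Ω} [IsProbabilityMeasure μ]
  {X : ℕ → Ω → ℝ} {M : Ω → ℕ}

theorem measure_exceedsBy_add_measure_firstPassage_le_of_indepFun (hXmeas : ∀ i, Measurable (X i))
    (hXindep : iIndepFun X μ) (hXsymm : ∀ i, (μ.map (X i)).map Neg.neg = μ.map (X i))
    (hM : Measurable M) (hMX : IndepFun M (fun ω k => X k ω) μ) (u : ℝ) :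
    μ {ω | (fun k => X k ω) ∈ exceedsBy u (M ω)}
        + μ {ω | (fun k => X k ω) ∈ firstPassage u (M ω)}
      ≤ 2 * μ {ω | (fun k => X k ω) ∈ sumAbove u (M ω)} := by
  have : ∀ i, IsProbabilityMeasure (μ.map (X i)) := fun i =>
    Measure.isProbabilityMeasure_map (hXmeas i).aemeasurable
  have hpath : Measurable fun ω k => X k ω := measurable_pi_lambda _ hXmeas
  have hlaw : ∀ S, MeasurableSet S →
      μ ((fun ω k => X k ω) ⁻¹' S) = Measure.infinitePi (fun i => μ.map (X i)) S := fun S hS => by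
    rw [← hXindep.map_fun_eq_infinitePi_map hXmeas, Measure.map_apply hpath hS]
  rw [hMX.measure_setOf_mem_eq_tsum hM hpath measurableSet_exceedsBy,
    hMX.measure_setOf_mem_eq_tsum hM hpath (measurableSet_firstPassage u),
    hMX.measure_setOf_mem_eq_tsum hM hpath measurableSet_sumAbove,
    ← ENNReal.tsum_add, ← ENNReal.tsum_mul_left]
  refine ENNReal.tsum_le_tsum fun n => ?_
  rw [← mul_add, mul_left_comm, hlaw _ (measurableSet_exceedsBy n),
    hlaw _ (measurableSet_firstPassage u n), hlaw _ (measurableSet_sumAbove n)]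
  gcongr
  exact measure_exceedsBy_add_measure_firstPassage_le hXsymm u n

theorem toReal_measure_firstPassage_poisson (hXmeas : ∀ i, Measurable (X i))
    (hM : Measurable M) (hMX : IndepFun M (fun ω k => X k ω) μ) {l u : ℝ} (hl : 0 ≤ l)
    (hu : 0 ≤ u) (hpois : ∀ n : ℕ,
      μ {ω | M ω = n} = ENNReal.ofReal (Real.exp (-l) * l ^ n / (Nat.factorial n))) :
    (μ {ω | (fun k => X k ω) ∈ firstPassage u (M ω)}).toReal = Real.exp (-l) *
        (l * (μ {ω | X 0 ω > u}).toReal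
          + ∑' m : ℕ, (l ^ (m + 2) / (Nat.factorial (m + 2))) *
              (μ {ω | (∀ k ∈ Icc 1 (m + 1), ∑ i ∈ range k, X i ω ≤ u)
                  ∧ ∑ i ∈ range (m + 2), X i ω > u}).toReal) := by
  have hpath : Measurable fun ω k => X k ω := measurable_pi_lambda _ hXmeas
  have hdecomp := hMX.measure_setOf_mem_eq_tsum hM hpath (measurableSet_firstPassage u)
  have hfin : ∑' n, μ {ω | M ω = n} * μ ((fun ω k => X k ω) ⁻¹' firstPassage u n) ≠ ⊤ :=
    hdecomp ▸ measure_ne_top μ _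
  have hweight : ∀ n : ℕ, (μ {ω | M ω = n}).toReal = Real.exp (-l) * l ^ n / n.factorial :=
    fun n => by rw [hpois, ENNReal.toReal_ofReal (by positivity)]
  have h0 : firstPassage u 0 = ∅ := by
    ext; simpa [firstPassage] using hu
  have h1 : (fun ω k => X k ω) ⁻¹' firstPassage u 1 = {ω | X 0 ω > u} := by
    ext; simp [firstPassage_eq_of_nonneg hu]
  have h2 : ∀ m : ℕ, (fun ω k => X k ω) ⁻¹' firstPassage u (m + 2)
      = {ω | (∀ k ∈ Icc 1 (m + 1), ∑ i ∈ range k, X i ω ≤ u) ∧ ∑ i ∈ range (m + 2), X i ω > u} :=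
    fun m => by ext; simp [firstPassage_eq_of_nonneg hu]
  rw [hdecomp,
    ENNReal.tsum_toReal_eq fun n => ENNReal.mul_ne_top (by simp [hpois]) (measure_ne_top μ _),
    ← (ENNReal.summable_toReal hfin).sum_add_tsum_nat_add 2, sum_range_succ, sum_range_one]
  simp only [ENNReal.toReal_mul, hweight, h0, h1, h2, Set.preimage_empty, measure_empty,
    ENNReal.toReal_zero, mul_zero, zero_add, mul_add, ← tsum_mul_left]
  congr 1
  · simp [mul_assoc]
  · exact tsum_congr fun m => by ring

end RandomTime

theorem refined_levy_inequality_general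
    {Ω : Type*} [MeasurableSpace Ω] (μ : Measure Ω) [IsProbabilityMeasure μ]
    (N : ℝ → Ω → ℕ) (X : ℕ → Ω → ℝ) (l : ℝ)
    -- N is a Poisson process with rate l
    (hl : 0 < l)
    (hNmeas : ∀ t, Measurable (N t))
    (hN0 : ∀ ω, N 0 ω = 0)
    (hNmono : ∀ ω, ∀ ⦃s t : ℝ⦄, s ≤ t → N s ω ≤ N t ω)
    (hNincr : ∀ s t : ℝ, 0 ≤ s → s ≤ t → ∀ n : ℕ,
        μ {ω | N t ω - N s ω = n}
          = ENNReal.ofReal (Real.exp (-(l * (t - s))) * (l * (t - s)) ^ n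
              / (Nat.factorial n)))
    -- i.i.d. symmetric jumps, independent of N
    (hXmeas : ∀ k, Measurable (X k))
    (hXindep : iIndepFun X μ)
    (hXid : ∀ k, Measure.map (X k) μ = Measure.map (X 0) μ)
    (hXsym : Measure.map (X 0) μ = Measure.map (fun ω => -X 0 ω) μ)
    (hNX : IndepFun (fun ω => fun t : ℝ => N t ω) (fun ω => fun k : ℕ => X k ω) μ)
    (D : ℝ → ℝ)
    (hD : ∀ u : ℝ, D u = Real.exp (-l) *
        (l * (μ {ω | X 0 ω > u}).toReal
          + ∑' m : ℕ, (l ^ (m + 2) / (Nat.factorial (m + 2))) *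
              (μ {ω | (∀ k ∈ Icc 1 (m + 1), ∑ i ∈ range k, X i ω ≤ u)
                  ∧ ∑ i ∈ range (m + 2), X i ω > u}).toReal)) :
    ∀ u : ℝ, 0 < u →
      (μ {ω | (⨆ t : Set.Icc (0:ℝ) 1, ∑ i ∈ range (N (t : ℝ) ω), X i ω) > u}).toReal
        ≤ 2 * (μ {ω | ∑ i ∈ range (N 1 ω), X i ω > u}).toReal - D u := by
  intro u hu
  have hXsymm : ∀ i, (μ.map (X i)).map Neg.neg = μ.map (X i) := fun i => by
    rw [hXid i, Measure.map_map measurable_neg (hXmeas 0)]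
    exact hXsym.symm
  have hindep : IndepFun (N 1) (fun ω k => X k ω) μ :=
    hNX.comp (measurable_pi_apply 1) measurable_id
  have hpois : ∀ n : ℕ, μ {ω | N 1 ω = n}
      = ENNReal.ofReal (Real.exp (-l) * l ^ n / (Nat.factorial n)) := fun n => by
    simpa [hN0] using hNincr 0 1 le_rfl zero_le_one n
  have hsup : {ω | (⨆ t : Set.Icc (0:ℝ) 1, ∑ i ∈ range (N (t : ℝ) ω), X i ω) > u}
      ⊆ {ω | (fun k => X k ω) ∈ exceedsBy u (N 1 ω)} :=
    fun ω hω => mem_exceedsBy_of_lt_ciSup (fun _ _ hst => hNmono ω hst) hω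
  have hlevy := (add_le_add (measure_mono hsup) le_rfl).trans
    (measure_exceedsBy_add_measure_firstPassage_le_of_indepFun hXmeas hXindep hXsymm
      (hNmeas 1) hindep u)
  have hreal := ENNReal.toReal_mono (by finiteness) hlevy
  rw [ENNReal.toReal_add (measure_ne_top _ _) (measure_ne_top _ _), ENNReal.toReal_mul,
    toReal_measure_firstPassage_poisson hXmeas (hNmeas 1) hindep hl.le hu.le hpois] at hreal
  rw [hD u]
  exact le_sub_iff_add_le.2 hreal

theorem refined_levy_inequality
    {Ω : Type*} [MeasurableSpace Ω] (μ : Measure Ω) [IsProbabilityMeasure μ]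
    (N : ℝ → Ω → ℕ) (X : ℕ → Ω → ℝ) (l : ℝ)
    -- N is a Poisson process with rate l
    (hl : 0 < l)
    (hNmeas : ∀ t, Measurable (N t))
    (hN0 : ∀ ω, N 0 ω = 0)
    (hNmono : ∀ ω, ∀ ⦃s t : ℝ⦄, s ≤ t → N s ω ≤ N t ω)
    (hNincr : ∀ s t : ℝ, 0 ≤ s → s ≤ t → ∀ n : ℕ,
        μ {ω | N t ω - N s ω = n}
          = ENNReal.ofReal (Real.exp (-(l * (t - s))) * (l * (t - s)) ^ n
              / (Nat.factorial n)))
    (hNind : ∀ n : ℕ, ∀ t : Fin (n + 1) → ℝ, Monotone t → (∀ i, 0 ≤ t i) →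
        iIndepFun
          (fun i : Fin n => fun ω => N (t i.succ) ω - N (t i.castSucc) ω) μ)
    -- i.i.d. symmetric jumps, independent of N
    (hXmeas : ∀ k, Measurable (X k))
    (hXindep : iIndepFun X μ)
    (hXid : ∀ k, Measure.map (X k) μ = Measure.map (X 0) μ)
    (hXsym : Measure.map (X 0) μ = Measure.map (fun ω => -X 0 ω) μ)
    (hNX : IndepFun (fun ω => fun t : ℝ => N t ω) (fun ω => fun k : ℕ => X k ω) μ)
    (D : ℝ → ℝ)
    (hD : ∀ u : ℝ, D u = Real.exp (-l) *
        (l * (μ {ω | X 0 ω > u}).toReal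
          + ∑' m : ℕ, (l ^ (m + 2) / (Nat.factorial (m + 2))) *
              (μ {ω | (∀ k ∈ Icc 1 (m + 1), ∑ i ∈ range k, X i ω ≤ u)
                  ∧ ∑ i ∈ range (m + 2), X i ω > u}).toReal)) :
    ∀ u : ℝ, 0 < u →
      (μ {ω | (⨆ t : Set.Icc (0:ℝ) 1, ∑ i ∈ range (N (t : ℝ) ω), X i ω) > u}).toReal
        ≤ 2 * (μ {ω | ∑ i ∈ range (N 1 ω), X i ω > u}).toReal - D u :=
  refined_levy_inequality_general μ N X l hl hNmeas hN0 hNmono hNincr hXmeas hXindep hXid hXsym hNX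
    D hD
end

section
/- Let X(t) be a symmetric compound Poisson process. Then limsup_{u→∞} P(sup_{0≤t≤1} X(t) > u) / P(X(1) > u) < 2 (strict inequality). -/
/-!
Let `S_n = X_0 + ⋯ + X_{n-1}` and `K = N(1)`, a Poisson variable independent of the walk `S`.
As `N` is nondecreasing, `sup_{t ≤ 1} X(t) > u` forces `S` to exceed `u` for the first time at
some step `k ≤ K`, an event of probability `∑ₖ P(first passage at k) P(K ≥ k)`. On the event
{first passage at `k`, `K = n`} we have `X(1) = S_k + (S_n - S_k) > u` as soon as
`S_n - S_k ≥ 0`, which is independent of the past, has probability `1` if `n = k`, and by symmetry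
probability at least `1/2` otherwise. Hence
`P(X(1) > u) ≥ ∑ₖ P(first passage at k) (P(K = k) + P(K ≥ k)) / 2`, and the Poisson tail bound
`P(K ≥ k) ≤ e^λ P(K = k)` gives `P(X(1) > u) ≥ (1 + e^{-λ}) / 2 ⋅ P(sup_{t ≤ 1} X(t) > u)`
for every `u`, so the limsup is at most `2 / (1 + e^{-λ}) < 2`.
-/

open MeasureTheory ProbabilityTheory Filter Finset
open scoped ENNReal Nat Function

lemma pow_add_div_factorial_le {r : ℝ} (hr : 0 ≤ r) (k m : ℕ) :
    r ^ (k + m) / (k + m)! ≤ r ^ k / k ! * (r ^ m / m !) := by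
  rw [pow_add, div_mul_div_comm]
  refine div_le_div_of_nonneg_left (by positivity) (by positivity) ?_
  exact_mod_cast Nat.le_of_dvd (Nat.factorial_pos _)
    (Nat.factorial_mul_factorial_dvd_factorial_add k m)

lemma ENNReal.add_tsum_div_two_le_tsum_mul {a d : ℕ → ℝ≥0∞} (hd₀ : d 0 = 1)
    (hd : ∀ m, 2⁻¹ ≤ d m) :
    (a 0 + ∑' m, a m) / 2 ≤ ∑' m, d m * a m := by
  rw [tsum_eq_zero_add' (f := a) ENNReal.summable,
    tsum_eq_zero_add' (f := fun m => d m * a m) ENNReal.summable, hd₀, one_mul, ← add_assoc,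
    ENNReal.add_div, ENNReal.add_div, ENNReal.add_halves, div_eq_mul_inv,
    ← ENNReal.tsum_mul_right]
  refine add_le_add_right (ENNReal.tsum_le_tsum fun m => ?_) _
  rw [mul_comm]
  exact mul_le_mul_left (hd _) _

lemma ENNReal.toReal_div_toReal_le_inv {a b c : ℝ≥0∞} (hb : b ≠ ∞) (hc : 0 < c.toReal)
    (h : c * a ≤ b) : a.toReal / b.toReal ≤ c.toReal⁻¹ := by
  refine div_le_of_le_mul₀ ENNReal.toReal_nonneg (inv_nonneg.mpr hc.le) ?_
  rw [le_inv_mul_iff₀ hc, ← ENNReal.toReal_mul]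
  exact ENNReal.toReal_mono hb h

section FirstPassage

variable {Ω : Type*} {X : ℕ → Ω → ℝ}

def firstExceed (X : ℕ → Ω → ℝ) (u : ℝ) (k : ℕ) : Set Ω :=
  {ω | u < ∑ i ∈ range k, X i ω ∧ ∀ j < k, ∑ i ∈ range j, X i ω ≤ u}

lemma pairwise_disjoint_firstExceed_inter (u : ℝ) (s : ℕ → Set Ω) :
    Pairwise (Disjoint on fun k => firstExceed X u k ∩ s k) := by
  intro k k' hne
  refine Set.disjoint_left.mpr fun ω ⟨⟨hk, hk_min⟩, _⟩ ⟨⟨hk', hk'_min⟩, _⟩ => ?_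
  rcases hne.lt_or_gt with h | h
  · exact (hk'_min k h).not_gt hk
  · exact (hk_min k' h).not_gt hk'

lemma exists_mem_firstExceed {u : ℝ} {ω : Ω} {n : ℕ}
    (h : ∃ j ≤ n, u < ∑ i ∈ range j, X i ω) : ∃ k ≤ n, ω ∈ firstExceed X u k := by
  classical
  have hex : ∃ j, u < ∑ i ∈ range j, X i ω := h.imp fun _ => And.right
  obtain ⟨j, hjn, hj⟩ := h
  exact ⟨Nat.find hex, (Nat.find_min' hex hj).trans hjn, Nat.find_spec hex,
    fun j hj => not_lt.mp (Nat.find_min hex hj)⟩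

lemma MeasurableSet.firstExceed {m : MeasurableSpace Ω} {u : ℝ} {k : ℕ}
    (hX : ∀ i < k, Measurable[m] (X i)) : MeasurableSet[m] (firstExceed X u k) := by
  have hS : ∀ j ≤ k, Measurable[m] fun ω => ∑ i ∈ range j, X i ω := fun j hj =>
    Finset.measurable_sum _ fun i hi => hX i ((mem_range.mp hi).trans_le hj)
  simp only [_root_.firstExceed, Set.ofPred_and, Set.ofPred_forall]
  exact (measurableSet_lt measurable_const (hS k le_rfl)).inter <| .iInter fun j =>
    .iInter fun hj => measurableSet_le (hS j hj.le) measurable_const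

lemma setOf_iSup_sum_range_gt_subset {N : ℝ → Ω → ℕ} (hN : ∀ ω, Monotone fun t => N t ω)
    {a b : ℝ} (hab : a ≤ b) (u : ℝ) :
    {ω | (⨆ t : Set.Icc a b, ∑ i ∈ range (N t ω), X i ω) > u}
      ⊆ {ω | ∃ j ≤ N b ω, u < ∑ i ∈ range j, X i ω} := by
  intro ω hω
  have : Nonempty (Set.Icc a b) := ⟨⟨a, le_rfl, hab⟩⟩
  obtain ⟨t, ht⟩ := exists_lt_of_lt_ciSup (Set.mem_ofPred.mp hω)
  exact ⟨N t ω, hN ω t.2.2, ht⟩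

end FirstPassage

section RandomWalk

variable {Ω : Type*} [MeasurableSpace Ω] {μ : Measure Ω} {X : ℕ → Ω → ℝ} {K : Ω → ℕ}

lemma measure_le_eq_tsum_measure_eq_add (hK : Measurable K) (k : ℕ) :
    μ {ω | k ≤ K ω} = ∑' m, μ {ω | K ω = k + m} := by
  have hunion : {ω | k ≤ K ω} = ⋃ m, {ω | K ω = k + m} := by
    ext ω
    simp [le_iff_exists_add]
  rw [hunion, measure_iUnion]
  · intro m m' hne
    exact Set.disjoint_left.mpr fun ω h h' => hne (by simp_all)
  · exact fun m => hK (measurableSet_singleton _)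

lemma ofReal_exp_neg_mul_measure_le_le (hK : Measurable K) {r : ℝ} (hr : 0 ≤ r)
    (hlaw : ∀ n, μ {ω | K ω = n} = ENNReal.ofReal (Real.exp (-r) * r ^ n / n !)) (k : ℕ) :
    ENNReal.ofReal (Real.exp (-r)) * μ {ω | k ≤ K ω} ≤ μ {ω | K ω = k} := by
  have hexp : ∑' m, ENNReal.ofReal (r ^ m / m !) = ENNReal.ofReal (Real.exp r) := by
    rw [← ENNReal.ofReal_tsum_of_nonneg (fun m => by positivity)
      (Real.summable_pow_div_factorial r), Real.exp_eq_exp_ℝ, NormedSpace.exp_eq_tsum_div]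
  calc ENNReal.ofReal (Real.exp (-r)) * μ {ω | k ≤ K ω}
      = ENNReal.ofReal (Real.exp (-r)) *
          ∑' m, ENNReal.ofReal (Real.exp (-r) * (r ^ (k + m) / (k + m)!)) := by
        simp_rw [measure_le_eq_tsum_measure_eq_add hK, hlaw, mul_div_assoc]
    _ ≤ ENNReal.ofReal (Real.exp (-r)) *
          ∑' m, ENNReal.ofReal (Real.exp (-r) * (r ^ k / k !)) * ENNReal.ofReal (r ^ m / m !) := by
        gcongr with m
        rw [← ENNReal.ofReal_mul (by positivity), mul_assoc]
        gcongr
        exact pow_add_div_factorial_le hr k m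
    _ = ENNReal.ofReal (Real.exp (-r) * (r ^ k / k !)) *
          (ENNReal.ofReal (Real.exp (-r)) * ENNReal.ofReal (Real.exp r)) := by
        rw [ENNReal.tsum_mul_left, hexp]
        ring
    _ = μ {ω | K ω = k} := by
        rw [← ENNReal.ofReal_mul (Real.exp_pos _).le, ← Real.exp_add, neg_add_cancel,
          Real.exp_zero, ENNReal.ofReal_one, mul_one, hlaw, mul_div_assoc]

lemma half_le_measure_nonneg [IsProbabilityMeasure μ] {T : Ω → ℝ}
    (hT : IdentDistrib T (-T) μ μ) : 2⁻¹ ≤ μ {ω | 0 ≤ T ω} := by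
  have hrefl : μ {ω | 0 ≤ T ω} = μ {ω | T ω ≤ 0} := by
    convert hT.measure_mem_eq (measurableSet_Ici (a := (0 : ℝ))) using 2 <;> ext ω <;> simp
  have hcover : 1 ≤ 2 * μ {ω | 0 ≤ T ω} :=
    calc 1 = μ ({ω | 0 ≤ T ω} ∪ {ω | T ω ≤ 0}) := by
          rw [← measure_univ (μ := μ)]
          congr 1
          ext ω
          simp [le_total]
      _ ≤ 2 * μ {ω | 0 ≤ T ω} := by
          rw [two_mul]
          nth_rw 2 [hrefl]
          exact measure_union_le _ _
  rwa [ENNReal.inv_le_iff_le_mul (by simp) (by simp)]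

lemma identDistrib_neg_of_map_eq (hX : ∀ k, Measurable (X k))
    (hXid : ∀ k, μ.map (X k) = μ.map (X 0)) (hXsym : μ.map (X 0) = μ.map (fun ω => -X 0 ω))
    (k : ℕ) : IdentDistrib (X k) (-X k) μ μ :=
  have h : IdentDistrib (X k) (X 0) μ μ := ⟨(hX k).aemeasurable, (hX 0).aemeasurable, hXid k⟩
  (h.trans ⟨(hX 0).aemeasurable, (hX 0).neg.aemeasurable, hXsym⟩).trans
    (h.symm.comp measurable_neg)

lemma half_le_measure_sum_Ico_nonneg [IsProbabilityMeasure μ] (hXind : iIndepFun X μ)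
    (hsym : ∀ i, IdentDistrib (X i) (-X i) μ μ) (k n : ℕ) :
    2⁻¹ ≤ μ {ω | 0 ≤ ∑ i ∈ Ico k n, X i ω} := by
  have hpath : IdentDistrib (fun ω i => X i ω) (fun ω i => -X i ω) μ μ :=
    IdentDistrib.pi hsym hXind (hXind.comp (fun _ => Neg.neg) fun _ => measurable_neg)
  refine half_le_measure_nonneg ?_
  convert hpath.comp (Finset.measurable_sum (Ico k n) fun i _ => measurable_pi_apply i) using 1
  all_goals ext ω; simp

lemma measure_firstExceed_inter_sum_Ico_nonneg (hX : ∀ i, Measurable (X i))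
    (hXind : iIndepFun X μ) (u : ℝ) (k n : ℕ) :
    μ (firstExceed X u k ∩ {ω | 0 ≤ ∑ i ∈ Ico k n, X i ω})
      = μ (firstExceed X u k) * μ {ω | 0 ≤ ∑ i ∈ Ico k n, X i ω} := by
  have hdisj : Disjoint (range k) (Ico k n) := by
    rw [range_eq_Ico]
    exact Ico_disjoint_Ico_consecutive 0 k n
  refine (hXind.indepFun_finset _ _ hdisj hX).meas_inter
    (MeasurableSet.firstExceed fun i hi => ?_) (measurableSet_le measurable_const ?_)
  · exact (measurable_pi_apply (⟨i, mem_range.mpr hi⟩ : range k)).comp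
      (comap_measurable fun ω (i : range k) => X i ω)
  · exact Finset.measurable_sum _ fun i hi =>
      (measurable_pi_apply (⟨i, hi⟩ : Ico k n)).comp
        (comap_measurable fun ω (i : Ico k n) => X i ω)

lemma measure_firstExceed_inter_sum_Ico_nonneg_inter_eq (hX : ∀ i, Measurable (X i))
    (hXind : iIndepFun X μ) (hXK : IndepFun (fun ω i => X i ω) K μ) (u : ℝ) (k n : ℕ) :
    μ (firstExceed X u k ∩ {ω | 0 ≤ ∑ i ∈ Ico k n, X i ω} ∩ {ω | K ω = n})
      = μ (firstExceed X u k) * (μ {ω | 0 ≤ ∑ i ∈ Ico k n, X i ω} * μ {ω | K ω = n}) := by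
  have hXc : ∀ i, Measurable[MeasurableSpace.comap (fun ω i => X i ω) inferInstance] (X i) :=
    fun i => (measurable_pi_apply i).comp (comap_measurable fun ω i => X i ω)
  calc _ = μ (firstExceed X u k ∩ {ω | 0 ≤ ∑ i ∈ Ico k n, X i ω}) * μ {ω | K ω = n} :=
        hXK.meas_inter ((MeasurableSet.firstExceed fun i _ => hXc i).inter
          (measurableSet_le measurable_const (Finset.measurable_sum _ fun i _ => hXc i)))
          ⟨{n}, measurableSet_singleton _, rfl⟩
    _ = _ := by rw [measure_firstExceed_inter_sum_Ico_nonneg hX hXind, mul_assoc]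

lemma measure_exists_sum_range_gt_eq_tsum (hX : ∀ i, Measurable (X i)) (hK : Measurable K)
    (hXK : IndepFun (fun ω i => X i ω) K μ) (u : ℝ) :
    μ {ω | ∃ j ≤ K ω, u < ∑ i ∈ range j, X i ω}
      = ∑' k, μ (firstExceed X u k) * μ {ω | k ≤ K ω} := by
  have hunion : {ω | ∃ j ≤ K ω, u < ∑ i ∈ range j, X i ω}
      = ⋃ k, firstExceed X u k ∩ {ω | k ≤ K ω} := by
    ext ω
    simp only [Set.mem_ofPred_eq, Set.mem_iUnion, Set.mem_inter_iff]
    constructor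
    · intro h
      obtain ⟨k, hk, hω⟩ := exists_mem_firstExceed h
      exact ⟨k, hω, hk⟩
    · rintro ⟨k, hω, hk⟩
      exact ⟨k, hk, hω.1⟩
  rw [hunion, measure_iUnion]
  · exact tsum_congr fun k => hXK.meas_inter
      (MeasurableSet.firstExceed fun i _ =>
        (measurable_pi_apply i).comp (comap_measurable fun ω i => X i ω))
      ⟨Set.Ici k, measurableSet_Ici, rfl⟩
  · exact pairwise_disjoint_firstExceed_inter u _
  · exact fun k => (MeasurableSet.firstExceed fun i _ => hX i).inter (hK measurableSet_Ici)

/-- On `firstExceed X u k ∩ {K = n}` the walk at time `K` exceeds `u` as soon as its increment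
over `[k, n)` is nonnegative: probability `1` for `n = k` and at least `1/2` otherwise. -/
lemma measure_firstExceed_mul_le [IsProbabilityMeasure μ] (hX : ∀ i, Measurable (X i))
    (hXind : iIndepFun X μ) (hsym : ∀ i, IdentDistrib (X i) (-X i) μ μ) (hK : Measurable K)
    (hXK : IndepFun (fun ω i => X i ω) K μ) (u : ℝ) (k : ℕ) :
    μ (firstExceed X u k) * ((μ {ω | K ω = k} + μ {ω | k ≤ K ω}) / 2)
      ≤ μ (firstExceed X u k ∩ {ω | u < ∑ i ∈ range (K ω), X i ω}) := by
  set D : ℕ → Set Ω := fun m => {ω | 0 ≤ ∑ i ∈ Ico k (k + m), X i ω}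
  set E : ℕ → Set Ω := fun m => firstExceed X u k ∩ D m ∩ {ω | K ω = k + m}
  have hE_meas : ∀ m, MeasurableSet (E m) := fun m =>
    ((MeasurableSet.firstExceed fun i _ => hX i).inter (measurableSet_le measurable_const
      (Finset.measurable_sum _ fun i _ => hX i))).inter (hK (measurableSet_singleton _))
  have hE_disj : Pairwise (Disjoint on E) := by
    intro m m' hne
    refine Set.disjoint_left.mpr fun ω hω hω' => hne ?_
    have : k + m = k + m' := hω.2.symm.trans hω'.2
    omega
  have hE_sub : ⋃ m, E m ⊆ firstExceed X u k ∩ {ω | u < ∑ i ∈ range (K ω), X i ω} := by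
    refine Set.iUnion_subset fun m ω ⟨⟨hF, hD⟩, hKω⟩ => ⟨hF, ?_⟩
    have hKω : K ω = k + m := hKω
    have hD : 0 ≤ ∑ i ∈ Ico k (k + m), X i ω := hD
    show u < ∑ i ∈ range (K ω), X i ω
    rw [hKω, ← sum_range_add_sum_Ico _ (Nat.le_add_right k m)]
    linarith [hF.1]
  calc μ (firstExceed X u k) * ((μ {ω | K ω = k} + μ {ω | k ≤ K ω}) / 2)
      ≤ μ (firstExceed X u k) * ∑' m, μ (D m) * μ {ω | K ω = k + m} := by
        gcongr
        rw [measure_le_eq_tsum_measure_eq_add hK]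
        exact ENNReal.add_tsum_div_two_le_tsum_mul (a := fun m => μ {ω | K ω = k + m})
          (by simp [D]) fun m => half_le_measure_sum_Ico_nonneg hXind hsym k (k + m)
    _ = ∑' m, μ (E m) := by
        rw [← ENNReal.tsum_mul_left]
        simp only [E, D, measure_firstExceed_inter_sum_Ico_nonneg_inter_eq hX hXind hXK]
    _ = μ (⋃ m, E m) := (measure_iUnion hE_disj hE_meas).symm
    _ ≤ _ := measure_mono hE_sub

lemma measurable_sum_range_of_measurable_index (hX : ∀ i, Measurable (X i))
    (hK : Measurable K) : Measurable fun ω => ∑ i ∈ range (K ω), X i ω :=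
  (measurable_from_prod_countable_right fun n => Finset.measurable_sum (range n) fun i _ => hX i
    : Measurable fun p : ℕ × Ω => ∑ i ∈ range p.1, X i p.2).comp (hK.prodMk measurable_id)

theorem mul_measure_exists_sum_range_gt_le [IsProbabilityMeasure μ]
    (hX : ∀ i, Measurable (X i)) (hXind : iIndepFun X μ)
    (hsym : ∀ i, IdentDistrib (X i) (-X i) μ μ) (hK : Measurable K)
    (hXK : IndepFun (fun ω i => X i ω) K μ) {δ : ℝ≥0∞}
    (hδ : ∀ k, δ * μ {ω | k ≤ K ω} ≤ μ {ω | K ω = k}) (u : ℝ) :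
    (1 + δ) / 2 * μ {ω | ∃ j ≤ K ω, u < ∑ i ∈ range j, X i ω}
      ≤ μ {ω | u < ∑ i ∈ range (K ω), X i ω} := by
  set B := {ω | u < ∑ i ∈ range (K ω), X i ω}
  have hB : MeasurableSet B :=
    measurableSet_lt measurable_const (measurable_sum_range_of_measurable_index hX hK)
  calc (1 + δ) / 2 * μ {ω | ∃ j ≤ K ω, u < ∑ i ∈ range j, X i ω}
      = ∑' k, (1 + δ) / 2 * (μ (firstExceed X u k) * μ {ω | k ≤ K ω}) := by
        rw [measure_exists_sum_range_gt_eq_tsum hX hK hXK, ENNReal.tsum_mul_left]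
    _ ≤ ∑' k, μ (firstExceed X u k) * ((μ {ω | K ω = k} + μ {ω | k ≤ K ω}) / 2) := by
        refine ENNReal.tsum_le_tsum fun k => ?_
        calc (1 + δ) / 2 * (μ (firstExceed X u k) * μ {ω | k ≤ K ω})
            = μ (firstExceed X u k) * ((δ * μ {ω | k ≤ K ω} + μ {ω | k ≤ K ω}) / 2) := by
              simp only [div_eq_mul_inv]
              ring
          _ ≤ _ := by gcongr; exact hδ k
    _ ≤ ∑' k, μ (firstExceed X u k ∩ B) :=
        ENNReal.tsum_le_tsum fun k => measure_firstExceed_mul_le hX hXind hsym hK hXK u k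
    _ = μ (⋃ k, firstExceed X u k ∩ B) :=
        (measure_iUnion (pairwise_disjoint_firstExceed_inter u _)
          fun k => (MeasurableSet.firstExceed fun i _ => hX i).inter hB).symm
    _ ≤ μ B := measure_mono (Set.iUnion_subset fun k => Set.inter_subset_right)

end RandomWalk

theorem symmetric_compound_poisson_limsup_lt_two_general
    {Ω : Type*} [MeasurableSpace Ω] (μ : Measure Ω) [IsProbabilityMeasure μ]
    (N : ℝ → Ω → ℕ) (X : ℕ → Ω → ℝ) (l : ℝ)
    -- N is a Poisson process with rate l
    (hl : 0 < l)
    (hNmeas : ∀ t, Measurable (N t))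
    (hN0 : ∀ ω, N 0 ω = 0)
    (hNmono : ∀ ω, ∀ ⦃s t : ℝ⦄, s ≤ t → N s ω ≤ N t ω)
    (hNincr : ∀ s t : ℝ, 0 ≤ s → s ≤ t → ∀ n : ℕ,
        μ {ω | N t ω - N s ω = n}
          = ENNReal.ofReal (Real.exp (-(l * (t - s))) * (l * (t - s)) ^ n
              / (Nat.factorial n)))
    -- i.i.d. symmetric jumps, independent of N
    (hXmeas : ∀ k, Measurable (X k))
    (hXindep : iIndepFun X μ)
    (hXid : ∀ k, Measure.map (X k) μ = Measure.map (X 0) μ)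
    (hXsym : Measure.map (X 0) μ = Measure.map (fun ω => -X 0 ω) μ)
    (hNX : IndepFun (fun ω => fun t : ℝ => N t ω) (fun ω => fun k : ℕ => X k ω) μ) :
    Filter.limsup (fun u : ℝ =>
        (μ {ω | (⨆ t : Set.Icc (0:ℝ) 1, ∑ i ∈ range (N (t : ℝ) ω), X i ω) > u}).toReal /
          (μ {ω | ∑ i ∈ range (N 1 ω), X i ω > u}).toReal) atTop < 2 := by
  set c : ℝ≥0∞ := (1 + ENNReal.ofReal (Real.exp (-l))) / 2
  have hN1 : ∀ n, μ {ω | N 1 ω = n} = ENNReal.ofReal (Real.exp (-l) * l ^ n / n !) := by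
    simpa [hN0] using hNincr 0 1 le_rfl zero_le_one
  have hbound : ∀ u, c * μ {ω | (⨆ t : Set.Icc (0:ℝ) 1, ∑ i ∈ range (N t ω), X i ω) > u}
      ≤ μ {ω | ∑ i ∈ range (N 1 ω), X i ω > u} := fun u =>
    (mul_le_mul_right (measure_mono (setOf_iSup_sum_range_gt_subset hNmono zero_le_one u)) c).trans
      (mul_measure_exists_sum_range_gt_le hXmeas hXindep
        (identDistrib_neg_of_map_eq hXmeas hXid hXsym) (hNmeas 1)
        (hNX.symm.comp measurable_id (measurable_pi_apply 1))
        (ofReal_exp_neg_mul_measure_le_le (hNmeas 1) hl.le hN1) u)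
  have hc : c.toReal = (1 + Real.exp (-l)) / 2 := by
    simp [c, ENNReal.toReal_add, (Real.exp_pos _).le]
  have hc_pos : 0 < c.toReal := by
    rw [hc]
    positivity
  calc _ ≤ c.toReal⁻¹ := limsup_le_of_le
        (isCoboundedUnder_le_of_le atTop fun u =>
          div_nonneg ENNReal.toReal_nonneg ENNReal.toReal_nonneg)
        (.of_forall fun u =>
          ENNReal.toReal_div_toReal_le_inv (measure_ne_top μ _) hc_pos (hbound u))
    _ < 2 := by
        rw [hc, inv_div, div_lt_iff₀ (by positivity)]
        linarith [Real.exp_pos (-l)]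

theorem symmetric_compound_poisson_limsup_lt_two
    {Ω : Type*} [MeasurableSpace Ω] (μ : Measure Ω) [IsProbabilityMeasure μ]
    (N : ℝ → Ω → ℕ) (X : ℕ → Ω → ℝ) (l : ℝ)
    -- N is a Poisson process with rate l
    (hl : 0 < l)
    (hNmeas : ∀ t, Measurable (N t))
    (hN0 : ∀ ω, N 0 ω = 0)
    (hNmono : ∀ ω, ∀ ⦃s t : ℝ⦄, s ≤ t → N s ω ≤ N t ω)
    (hNincr : ∀ s t : ℝ, 0 ≤ s → s ≤ t → ∀ n : ℕ,
        μ {ω | N t ω - N s ω = n}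
          = ENNReal.ofReal (Real.exp (-(l * (t - s))) * (l * (t - s)) ^ n
              / (Nat.factorial n)))
    (hNind : ∀ n : ℕ, ∀ t : Fin (n + 1) → ℝ, Monotone t → (∀ i, 0 ≤ t i) →
        iIndepFun
          (fun i : Fin n => fun ω => N (t i.succ) ω - N (t i.castSucc) ω) μ)
    -- i.i.d. symmetric jumps, independent of N
    (hXmeas : ∀ k, Measurable (X k))
    (hXindep : iIndepFun X μ)
    (hXid : ∀ k, Measure.map (X k) μ = Measure.map (X 0) μ)
    (hXsym : Measure.map (X 0) μ = Measure.map (fun ω => -X 0 ω) μ)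
    (hNX : IndepFun (fun ω => fun t : ℝ => N t ω) (fun ω => fun k : ℕ => X k ω) μ)
    (hpos : ∀ u : ℝ, 0 < (μ {ω | ∑ i ∈ range (N 1 ω), X i ω > u}).toReal) :
    Filter.limsup (fun u : ℝ =>
        (μ {ω | (⨆ t : Set.Icc (0:ℝ) 1, ∑ i ∈ range (N (t : ℝ) ω), X i ω) > u}).toReal /
          (μ {ω | ∑ i ∈ range (N 1 ω), X i ω > u}).toReal) atTop < 2 :=
  symmetric_compound_poisson_limsup_lt_two_general μ N X l hl hNmeas hN0 hNmono hNincr hXmeas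
    hXindep hXid hXsym hNX
end

section
/- Let {X_k} be i.i.d. symmetric random variables with partial sums S_k. Then for all u>0 and n≥2: P(max_{1≤k≤n−1} S_k > u, S_n ≤ u) ≤ P(S_n > u) − P(max_{1≤k≤n−1} S_k ≤ u, S_n > u). -/
/-!
Decompose the event `max_{1 ≤ k < n} S_k > u` according to the first time `j` at which the walk
exceeds `u`. The event "first passage at time `j`" depends only on `X_0, …, X_{j-1}`, hence is
independent of the increment `S_n - S_j`, which is symmetric as a sum of independent symmetric
variables. On that event `S_n ≤ u` forces `S_n - S_j < 0` and `S_n - S_j > 0` forces `S_n > u`,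
so reflecting the increment gives `P(S_n ≤ u, first passage at j) ≤ P(S_n > u, first passage
at j)`. Summing over `j` yields `P(max > u, S_n ≤ u) ≤ P(max > u, S_n > u)`, and the latter is
`P(S_n > u) - P(max ≤ u, S_n > u)`.
-/

open MeasureTheory ProbabilityTheory Finset

lemma biUnion_range_disjointed {α : Type*} (f : ℕ → Set α) (n : ℕ) :
    ⋃ i ∈ range n, disjointed f i = ⋃ i ∈ range n, f i := by
  cases n with
  | zero => simp
  | succ n => rw [biUnion_range_succ_disjointed, partialSups_eq_biSup]; simp

section General

variable {Ω ι E : Type*} {mΩ : MeasurableSpace Ω} {μ : Measure Ω}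

lemma measure_biUnion_range_inter_le_of_disjointed {E : ℕ → Set Ω} {C D : Set Ω}
    (hE : ∀ i, MeasurableSet (E i)) (hC : MeasurableSet C) (n : ℕ)
    (h : ∀ i < n, μ (disjointed E i ∩ D) ≤ μ (disjointed E i ∩ C)) :
    μ ((⋃ i ∈ range n, E i) ∩ D) ≤ μ ((⋃ i ∈ range n, E i) ∩ C) := by
  have hdisj : ((range n : Set ℕ)).PairwiseDisjoint (fun i ↦ disjointed E i ∩ C) :=
    fun i _ j _ hij ↦ ((disjoint_disjointed E hij).inter_left C).inter_right C
  simp only [← biUnion_range_disjointed E n, Set.iUnion₂_inter]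
  calc μ (⋃ i ∈ range n, disjointed E i ∩ D)
      ≤ ∑ i ∈ range n, μ (disjointed E i ∩ D) := measure_biUnion_finset_le _ _
    _ ≤ ∑ i ∈ range n, μ (disjointed E i ∩ C) :=
        sum_le_sum fun i hi ↦ h i (mem_range.mp hi)
    _ = μ (⋃ i ∈ range n, disjointed E i ∩ C) :=
        (measure_biUnion_finset hdisj fun i _ ↦ (MeasurableSet.disjointed hE i).inter hC).symm

lemma measurable_sum_iSup_comap [mE : MeasurableSpace E] [AddCommMonoid E] [MeasurableAdd₂ E]
    {X : ι → Ω → E} {S : Set ι} {s : Finset ι} (hs : (s : Set ι) ⊆ S) :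
    Measurable[⨆ k ∈ S, mE.comap (X k)] fun ω ↦ ∑ k ∈ s, X k ω :=
  Finset.measurable_sum s fun k hk ↦
    (comap_measurable (X k)).mono (le_iSup₂ (f := fun k _ ↦ mE.comap (X k)) k (hs hk)) le_rfl

lemma ProbabilityTheory.iIndepFun.identDistrib_sum_neg [MeasurableSpace E] [AddCommGroup E]
    [MeasurableNeg E] [MeasurableAdd₂ E] [Countable ι] {X : ι → Ω → E}
    (hind : iIndepFun X μ) (hsymm : ∀ i, IdentDistrib (X i) (-X i) μ μ) (s : Finset ι) :
    IdentDistrib (fun ω ↦ ∑ i ∈ s, X i ω) (fun ω ↦ -∑ i ∈ s, X i ω) μ μ := by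
  have hvec := IdentDistrib.pi hsymm hind (hind.comp (fun _ ↦ Neg.neg) fun _ ↦ measurable_neg)
  convert hvec.comp (u := fun v : ι → E ↦ ∑ i ∈ s, v i)
    (Finset.measurable_sum s fun i _ ↦ measurable_pi_apply i) using 1 <;>
  · ext ω
    simp

lemma ProbabilityTheory.IdentDistrib.measure_neg_eq_measure_pos {T : Ω → ℝ}
    (h : IdentDistrib T (-T) μ μ) : μ {ω | T ω < 0} = μ {ω | 0 < T ω} := by
  simpa [Set.preimage] using h.measure_mem_eq (measurableSet_Iio (a := (0 : ℝ)))

lemma ProbabilityTheory.IdentDistrib.measure_inter_neg_eq_measure_inter_pos {T : Ω → ℝ}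
    (hsymm : IdentDistrib T (-T) μ μ) {m₁ m₂ : MeasurableSpace Ω} (hind : Indep m₁ m₂ μ)
    {F : Set Ω} (hF : MeasurableSet[m₁] F) (hT : Measurable[m₂] T) :
    μ (F ∩ {ω | T ω < 0}) = μ (F ∩ {ω | 0 < T ω}) := by
  rw [Indep_iff] at hind
  calc μ (F ∩ {ω | T ω < 0}) = μ F * μ {ω | T ω < 0} := hind _ _ hF (hT measurableSet_Iio)
    _ = μ F * μ {ω | 0 < T ω} := by rw [hsymm.measure_neg_eq_measure_pos]
    _ = μ (F ∩ {ω | 0 < T ω}) := (hind _ _ hF (hT measurableSet_Ioi)).symm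

end General

section RandomWalk

variable {Ω : Type*} {mΩ : MeasurableSpace Ω} {μ : Measure Ω} {X : ℕ → Ω → ℝ}

lemma measure_inter_sum_range_le_le_measure_inter_lt (hXmeas : ∀ k, Measurable (X k))
    (hind : iIndepFun X μ) (hsymm : ∀ k, IdentDistrib (X k) (-X k) μ μ) {u : ℝ} {j n : ℕ}
    (hjn : j ≤ n) {F : Set Ω}
    (hF : MeasurableSet[⨆ k ∈ Set.Iio j, Real.measurableSpace.comap (X k)] F)
    (hFj : F ⊆ {ω | u < ∑ k ∈ range j, X k ω}) :
    μ (F ∩ {ω | ∑ k ∈ range n, X k ω ≤ u}) ≤ μ (F ∩ {ω | u < ∑ k ∈ range n, X k ω}) := by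
  have hsplit : ∀ ω, ∑ k ∈ range n, X k ω = ∑ k ∈ range j, X k ω + ∑ k ∈ Ico j n, X k ω :=
    fun ω ↦ (sum_range_add_sum_Ico _ hjn).symm
  have hpast_future : Indep (⨆ k ∈ Set.Iio j, Real.measurableSpace.comap (X k))
      (⨆ k ∈ (Ico j n : Set ℕ), Real.measurableSpace.comap (X k)) μ :=
    indep_iSup_of_disjoint (fun k ↦ (hXmeas k).comap_le) ((iIndepFun_iff_iIndep _ _ _).mp hind)
      (Set.disjoint_left.mpr fun k hk hk' ↦ by simp at hk hk'; omega)
  have hreflect := (hind.identDistrib_sum_neg hsymm (Ico j n))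
    |>.measure_inter_neg_eq_measure_inter_pos hpast_future hF (measurable_sum_iSup_comap subset_rfl)
  calc μ (F ∩ {ω | ∑ k ∈ range n, X k ω ≤ u})
      ≤ μ (F ∩ {ω | ∑ k ∈ Ico j n, X k ω < 0}) :=
        measure_mono fun ω ⟨hω, hn⟩ ↦ ⟨hω, by
          have hj := hFj hω
          simp only [Set.mem_ofPred_eq] at hj hn ⊢
          linarith [hsplit ω]⟩
    _ = μ (F ∩ {ω | 0 < ∑ k ∈ Ico j n, X k ω}) := hreflect
    _ ≤ μ (F ∩ {ω | u < ∑ k ∈ range n, X k ω}) :=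
        measure_mono fun ω ⟨hω, hT⟩ ↦ ⟨hω, by
          have hj := hFj hω
          simp only [Set.mem_ofPred_eq] at hj hT ⊢
          linarith [hsplit ω]⟩

-- `disjointed` of these events is the event that the walk first exceeds `u` at time `j + 1`.
lemma measurableSet_disjointed_sum_range_gt (u : ℝ) (j : ℕ) :
    MeasurableSet[⨆ k ∈ Set.Iio (j + 1), Real.measurableSpace.comap (X k)]
      (disjointed (fun i ↦ {ω | u < ∑ k ∈ range (i + 1), X k ω}) j) := by
  have hE : ∀ i ≤ j, MeasurableSet[⨆ k ∈ Set.Iio (j + 1), Real.measurableSpace.comap (X k)]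
      {ω | u < ∑ k ∈ range (i + 1), X k ω} := fun i hi ↦
    measurable_sum_iSup_comap (fun k hk ↦ by simp at hk ⊢; omega) measurableSet_Ioi
  rw [disjointed_eq_inter_compl]
  exact (hE j le_rfl).inter
    (MeasurableSet.iInter fun i ↦ MeasurableSet.iInter fun hi ↦ (hE i hi.le).compl)

lemma setOf_exists_sum_range_gt (u : ℝ) (m : ℕ) :
    {ω | ∃ k ∈ Icc 1 m, u < ∑ i ∈ range k, X i ω}
      = ⋃ i ∈ range m, {ω | u < ∑ k ∈ range (i + 1), X k ω} := by
  ext ω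
  simp only [Set.mem_iUnion, mem_range, mem_Icc, Set.mem_ofPred_eq, exists_prop]
  constructor
  · rintro ⟨k, ⟨hk1, hkm⟩, h⟩
    exact ⟨k - 1, by omega, by rwa [Nat.sub_add_cancel hk1]⟩
  · rintro ⟨i, hi, h⟩
    exact ⟨i + 1, ⟨by omega, by omega⟩, h⟩

lemma measurableSet_exists_sum_range_gt (hXmeas : ∀ k, Measurable (X k)) (u : ℝ) (m : ℕ) :
    MeasurableSet {ω | ∃ k ∈ Icc 1 m, u < ∑ i ∈ range k, X i ω} := by
  rw [setOf_exists_sum_range_gt]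
  exact .biUnion (Set.to_countable _) fun i _ ↦
    Finset.measurable_sum _ (fun k _ ↦ hXmeas k) measurableSet_Ioi

lemma measure_exists_sum_range_gt_and_le_le (hXmeas : ∀ k, Measurable (X k))
    (hind : iIndepFun X μ) (hsymm : ∀ k, IdentDistrib (X k) (-X k) μ μ) (u : ℝ) {m n : ℕ}
    (hmn : m ≤ n) :
    μ {ω | (∃ k ∈ Icc 1 m, u < ∑ i ∈ range k, X i ω) ∧ ∑ i ∈ range n, X i ω ≤ u}
      ≤ μ {ω | (∃ k ∈ Icc 1 m, u < ∑ i ∈ range k, X i ω) ∧ u < ∑ i ∈ range n, X i ω} := by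
  have hS : ∀ m, Measurable fun ω ↦ ∑ i ∈ range m, X i ω :=
    fun m ↦ Finset.measurable_sum _ fun i _ ↦ hXmeas i
  simp only [Set.ofPred_and, setOf_exists_sum_range_gt]
  exact measure_biUnion_range_inter_le_of_disjointed (fun i ↦ hS (i + 1) measurableSet_Ioi)
    (hS n measurableSet_Ioi) m fun i hi ↦
    measure_inter_sum_range_le_le_measure_inter_lt hXmeas hind hsymm (by omega)
      (measurableSet_disjointed_sum_range_gt u i) (disjointed_subset _ i)

end RandomWalk

theorem reflection_step
    {Ω : Type*} [MeasurableSpace Ω] (μ : Measure Ω) [IsProbabilityMeasure μ]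
    (X : ℕ → Ω → ℝ)
    (hXmeas : ∀ k, Measurable (X k))
    (hXindep : iIndepFun X μ)
    (hXid : ∀ k, Measure.map (X k) μ = Measure.map (X 0) μ)
    (hXsym : Measure.map (X 0) μ = Measure.map (fun ω => -X 0 ω) μ) :
    ∀ u : ℝ, 0 < u → ∀ n : ℕ, 2 ≤ n →
      (μ {ω | (∃ k ∈ Icc 1 (n - 1), ∑ i ∈ range k, X i ω > u)
            ∧ ∑ i ∈ range n, X i ω ≤ u}).toReal
        ≤ (μ {ω | ∑ i ∈ range n, X i ω > u}).toReal
            - (μ {ω | (∀ k ∈ Icc 1 (n - 1), ∑ i ∈ range k, X i ω ≤ u)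
                ∧ ∑ i ∈ range n, X i ω > u}).toReal := by
  intro u _ n _
  have hsymm : ∀ k, IdentDistrib (X k) (-X k) μ μ := fun k ↦
    have hk : IdentDistrib (X k) (X 0) μ μ :=
      ⟨(hXmeas k).aemeasurable, (hXmeas 0).aemeasurable, hXid k⟩
    hk.trans (IdentDistrib.trans ⟨(hXmeas 0).aemeasurable, (hXmeas 0).neg.aemeasurable, hXsym⟩
      (hk.symm.comp measurable_neg))
  set A := {ω | ∃ k ∈ Icc 1 (n - 1), u < ∑ i ∈ range k, X i ω}
  set C := {ω | u < ∑ i ∈ range n, X i ω}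
  have hcross := ENNReal.toReal_mono (measure_ne_top _ _)
    (measure_exists_sum_range_gt_and_le_le hXmeas hXindep hsymm u (Nat.sub_le n 1))
  have hsplit := measureReal_sdiff_add_inter (μ := μ) (s := C)
    (measurableSet_exists_sum_range_gt hXmeas u (n - 1))
  have hright : {ω | (∀ k ∈ Icc 1 (n - 1), ∑ i ∈ range k, X i ω ≤ u)
      ∧ u < ∑ i ∈ range n, X i ω} = C \ A := by
    ext ω
    simp [A, C, and_comm]
  simp only [gt_iff_lt, hright]
  simp only [← measureReal_def, Set.ofPred_and] at hcross hsplit ⊢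
  rw [Set.inter_comm] at hsplit
  linarith
end
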